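/- arXiv:1007.0996 — 15 statements merged into one kernel-verified Lean document; each statement's English description precedes it below -/
import Mathlib

section
/- Every subtraction algebra satisfies the identities ((x−y)−(x−z))−(z−y) = 0 and (x−(x−y))−y = 0 for all x,y,z. -/
/-- Every subtraction algebra satisfies the identities
`((x−y)−(x−z))−(z−y) = 0` and `(x−(x−y))−y = 0`. -/
theorem subtraction_algebra_bck_identities {G : Type*}
    (sub : G → G → G) (zero : G)
    (sub1 : ∀ x y : G, sub x (sub y x) = x)
    (sub2 : ∀ x y : G, sub x (sub x y) = sub y (sub y x))
    (sub3 : ∀ x y z : G, sub (sub x y) z = sub (sub x z) y)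
    (sub4 : sub zero zero = zero) :
    ∀ x y z : G,
      sub (sub (sub x y) (sub x z)) (sub z y) = zero ∧
      sub (sub x (sub x y)) y = zero := by
  have zz : ∀ a b : G, sub a a = sub b b := by
    intro a b
    calc sub a a
        = sub a (sub a (sub b a)) := by rw [sub1 a b]
      _ = sub (sub b a) (sub (sub b a) a) := sub2 a (sub b a)
      _ = sub (sub b a) (sub (sub b a) (sub a (sub b a))) := by rw [sub1 a b]
      _ = sub (sub b a) (sub b a) := by rw [sub1 (sub b a) a]
      _ = sub (sub b a) (sub (sub b (sub b b)) a) := by rw [sub1 b b]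
      _ = sub (sub b a) (sub (sub b a) (sub b b)) := by rw [sub3 b (sub b b) a]
      _ = sub (sub b b) (sub (sub b b) (sub b a)) := sub2 (sub b a) (sub b b)
      _ = sub (sub b (sub (sub b b) (sub b a))) b :=
          (sub3 b (sub (sub b b) (sub b a)) b).symm
      _ = sub (sub b (sub (sub b (sub b a)) b)) b := by rw [sub3 b b (sub b a)]
      _ = sub b b := by rw [sub1 b (sub b (sub b a))]
  have zzero : ∀ t : G, sub t t = zero := fun t => (zz t zero).trans sub4
  intro x y z
  refine ⟨?_, ?_⟩
  · calc sub (sub (sub x y) (sub x z)) (sub z y)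
        = sub (sub (sub x (sub x z)) y) (sub z y) := by rw [sub3 x y (sub x z)]
      _ = sub (sub (sub (sub x (sub (sub z y) x)) (sub x z)) y) (sub z y) := by
          rw [sub1 x (sub z y)]
      _ = sub (sub (sub (sub x (sub x z)) (sub (sub z y) x)) y) (sub z y) := by
          rw [sub3 x (sub (sub z y) x) (sub x z)]
      _ = sub (sub (sub (sub x (sub x z)) y) (sub (sub z y) x)) (sub z y) := by
          rw [sub3 (sub x (sub x z)) (sub (sub z y) x) y]
      _ = sub (sub (sub (sub z (sub z x)) y) (sub (sub z y) x)) (sub z y) := by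
          rw [sub2 x z]
      _ = sub (sub (sub (sub z y) (sub z x)) (sub (sub z y) x)) (sub z y) := by
          rw [sub3 z (sub z x) y]
      _ = sub (sub (sub (sub z y) (sub (sub z y) x)) (sub z x)) (sub z y) := by
          rw [sub3 (sub z y) (sub z x) (sub (sub z y) x)]
      _ = sub (sub (sub x (sub x (sub z y))) (sub z x)) (sub z y) := by
          rw [← sub2 x (sub z y)]
      _ = sub (sub (sub x (sub z x)) (sub x (sub z y))) (sub z y) := by
          rw [sub3 x (sub x (sub z y)) (sub z x)]
      _ = sub (sub (sub x (sub z x)) (sub z y)) (sub x (sub z y)) := by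
          rw [sub3 (sub x (sub z x)) (sub x (sub z y)) (sub z y)]
      _ = sub (sub x (sub z y)) (sub x (sub z y)) := by rw [sub1 x z]
      _ = zero := zzero _
  · calc sub (sub x (sub x y)) y
        = sub (sub x y) (sub x y) := (sub3 x y (sub x y)).symm
      _ = zero := zzero _
end

section
/- In any subtraction Menger algebra of rank n, the relation ω = {(x,y) : x−y = 0} (written x ≤ y) is stable: if x ≤ y then x[z₁…zₙ] ≤ y[z₁…zₙ] for all z₁,…,zₙ ∈ G, and if x ≤ y then u[w̄|ᵢx] ≤ u[w̄|ᵢy] for all u ∈ G, w̄ ∈ Gⁿ and 1 ≤ i ≤ n. -/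
/-- `MengerPoly op t` means that `t : G → G` is a unary polynomial of the Menger
algebra `(G, op)`: the smallest collection of maps containing the identity and
closed under `t ↦ (x ↦ a[b₁ … bᵢ₋₁ (t x) bᵢ₊₁ … bₙ])`. -/
inductive MengerPoly {G : Type} {n : ℕ} (op : G → (Fin n → G) → G) : (G → G) → Prop
  | id : MengerPoly op (fun x => x)
  | comp (a : G) (b : Fin n → G) (i : Fin n) (t : G → G) :
      MengerPoly op t → MengerPoly op (fun x => op a (Function.update b i (t x)))

/-- In any subtraction Menger algebra of rank `n`, the relation
`ω = {(x,y) : x − y = 0}` is stable. -/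
theorem subtraction_menger_order_stable {G : Type} {n : ℕ}
    (op : G → (Fin n → G) → G) (sub : G → G → G) (zero : G)
    (superassoc : ∀ (x : G) (y z : Fin n → G),
      op (op x y) z = op x (fun i => op (y i) z))
    (sub1 : ∀ x y : G, sub x (sub y x) = x)
    (sub2 : ∀ x y : G, sub x (sub x y) = sub y (sub y x))
    (sub3 : ∀ x y z : G, sub (sub x y) z = sub (sub x z) y)
    (sub4 : sub zero zero = zero)
    (distrib : ∀ (x y : G) (z : Fin n → G),
      op (sub x y) z = sub (op x z) (op y z))
    (meetax : ∀ (u : G) (w : Fin n → G) (i : Fin n) (x y : G),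
      op u (Function.update w i (sub x (sub x y)))
        = sub (op u (Function.update w i x)) (op u (Function.update w i (sub x y))))
    (steady : ∀ (x y z : G) (t₁ t₂ : G → G), MengerPoly op t₁ → MengerPoly op t₂ →
      sub x y = zero → sub z (t₁ x) = zero → sub z (t₂ y) = zero →
      sub z (t₂ x) = zero)
    :
    ∀ x y : G, sub x y = zero →
      (∀ z : Fin n → G, sub (op x z) (op y z) = zero) ∧
      (∀ (u : G) (w : Fin n → G) (i : Fin n),
        sub (op u (Function.update w i x)) (op u (Function.update w i y)) = zero) := by
  -- Lemma L1 : (x−x)−y = x−x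
  have L1 : ∀ x y : G, sub (sub x x) y = sub x x := by
    intro x y
    calc sub (sub x x) y
        = sub (sub (sub x x) (sub (sub x y) (sub x x))) y := by
          rw [sub1 (sub x x) (sub x y)]
      _ = sub (sub (sub x (sub (sub x y) (sub x x))) x) y := by
          rw [sub3 x x (sub (sub x y) (sub x x))]
      _ = sub (sub (sub x (sub (sub x y) (sub x x))) y) x := by
          rw [sub3 (sub x (sub (sub x y) (sub x x))) x y]
      _ = sub (sub (sub x y) (sub (sub x y) (sub x x))) x := by
          rw [← sub3 x y (sub (sub x y) (sub x x))]
      _ = sub (sub (sub x x) (sub (sub x x) (sub x y))) x := by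
          rw [sub2 (sub x y) (sub x x)]
      _ = sub (sub (sub x (sub (sub x x) (sub x y))) x) x := by
          rw [sub3 x x (sub (sub x x) (sub x y))]
      _ = sub (sub (sub x (sub (sub x (sub x y)) x)) x) x := by
          rw [sub3 x x (sub x y)]
      _ = sub (sub x x) x := by rw [sub1 x (sub x (sub x y))]
      _ = sub (sub x x) (sub x (sub x x)) := by rw [sub1 x x]
      _ = sub x x := sub1 (sub x x) x
  have L2 : ∀ y : G, sub zero y = zero := by
    intro y
    have := L1 zero y
    rwa [sub4] at this
  have L3 : ∀ x : G, sub x x = zero := by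
    intro x
    have h := sub2 zero (sub x x)
    rw [L2 (sub x x), sub4, L1 x zero, L1 x (sub x x)] at h
    exact h.symm
  have L4 : ∀ x : G, sub x zero = x := by
    intro x
    rw [← L3 x, sub1]
  have L5 : ∀ a b : G, sub (sub a b) a = zero := by
    intro a b
    rw [sub3, L3, L2]
  intro x y hxy
  constructor
  · intro z
    rw [← distrib, hxy]
    have : op zero z = sub (op zero z) (op zero z) := by
      rw [← distrib, sub4]
    rw [this, L3]
  · intro u w i
    have h := meetax u w i y x
    have hy : sub y (sub y x) = x := by
      rw [sub2, hxy, L4]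
    rw [hy] at h
    rw [h, L5]
end

section
/- Let (G,o) be a Menger algebra of rank n and (G,−,0) a subtraction algebra such that (x−y)[z₁…zₙ] = x[z₁…zₙ]−y[z₁…zₙ] for all x,y,z₁,…,zₙ ∈ G, and such that x−y=0 ∧ z−t₁(x)=0 ∧ z−t₂(y)=0 imply z−t₂(x)=0 for all x,y,z ∈ G and t₁,t₂ ∈ Tₙ(G). Then the following four conditions are equivalent: (i) u[w̄|ᵢ(x−(x−y))] = u[w̄|ᵢx]−u[w̄|ᵢ(x−y)] for all x,y,u ∈ G, w̄ ∈ Gⁿ, 1 ≤ i ≤ n; (ii) x ≤ y implies u[w̄|ᵢ(y−x)] = u[w̄|ᵢy]−u[w̄|ᵢx] for all x,y,u ∈ G, w̄ ∈ Gⁿ, 1 ≤ i ≤ n; (iii) x ≤ y implies t(y−x) = t(y)−t(x) for all x,y ∈ G and all t ∈ Tₙ(G); (iv) t(x−(x−y)) = t(x)−t(x−y) for all x,y ∈ G and all t ∈ Tₙ(G). -/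
/-- Equivalence of four forms of the axiom (12) in a Menger algebra with a
subtraction algebra structure satisfying distributivity and the weak-steadiness
axiom. -/
theorem subtraction_menger_axiom12_tfae {G : Type} {n : ℕ}
    (op : G → (Fin n → G) → G) (sub : G → G → G) (zero : G)
    (superassoc : ∀ (x : G) (y z : Fin n → G),
      op (op x y) z = op x (fun i => op (y i) z))
    (sub1 : ∀ x y : G, sub x (sub y x) = x)
    (sub2 : ∀ x y : G, sub x (sub x y) = sub y (sub y x))
    (sub3 : ∀ x y z : G, sub (sub x y) z = sub (sub x z) y)
    (sub4 : sub zero zero = zero)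
    (distrib : ∀ (x y : G) (z : Fin n → G),
      op (sub x y) z = sub (op x z) (op y z))

    (steady : ∀ (x y z : G) (t₁ t₂ : G → G), MengerPoly op t₁ → MengerPoly op t₂ →
      sub x y = zero → sub z (t₁ x) = zero → sub z (t₂ y) = zero →
      sub z (t₂ x) = zero)
    :
    [ (∀ (u : G) (w : Fin n → G) (i : Fin n) (x y : G),
        op u (Function.update w i (sub x (sub x y)))
          = sub (op u (Function.update w i x)) (op u (Function.update w i (sub x y)))),
      (∀ x y : G, sub x y = zero →
        ∀ (u : G) (w : Fin n → G) (i : Fin n),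
          op u (Function.update w i (sub y x))
            = sub (op u (Function.update w i y)) (op u (Function.update w i x))),
      (∀ t : G → G, MengerPoly op t → ∀ x y : G, sub x y = zero →
        t (sub y x) = sub (t y) (t x)),
      (∀ t : G → G, MengerPoly op t → ∀ x y : G,
        t (sub x (sub x y)) = sub (t x) (t (sub x y))) ].TFAE := by
  clear superassoc distrib steady
  -- Basic subtraction-algebra facts
  have same : ∀ a b : G, sub a a = sub b b := by
    intro a b
    calc sub a a
        = sub (sub a a) (sub (sub a b) (sub a a)) := (sub1 _ _).symm
      _ = sub (sub a a) (sub (sub a (sub a a)) b) := by rw [sub3 a b (sub a a)]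
      _ = sub (sub a a) (sub a b) := by rw [sub1 a a]
      _ = sub (sub a (sub a b)) a := (sub3 a a (sub a b)).symm ▸ (sub3 a (sub a b) a).symm
      _ = sub (sub b (sub b a)) a := by rw [sub2 a b]
      _ = sub (sub b a) (sub b a) := sub3 b (sub b a) a
      _ = sub (sub b a) (sub (sub b (sub b b)) a) := by rw [sub1 b b]
      _ = sub (sub b a) (sub (sub b a) (sub b b)) := by rw [sub3 b (sub b b) a]
      _ = sub (sub b b) (sub (sub b b) (sub b a)) := sub2 (sub b a) (sub b b)
      _ = sub (sub b (sub (sub b b) (sub b a))) b := (sub3 b (sub (sub b b) (sub b a)) b).symm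
      _ = sub (sub b (sub (sub b (sub b a)) b)) b := by rw [← sub3 b (sub b a) b]
      _ = sub b b := by rw [sub1 b (sub b (sub b a))]
  have zz : ∀ x : G, sub x x = zero := fun x => (same x zero).trans sub4
  have xz : ∀ x : G, sub x zero = x := by
    intro x
    have h := sub1 x x
    rw [zz x] at h
    exact h
  have zx : ∀ x : G, sub zero x = zero := by
    intro x
    have h := sub1 zero x
    rw [xz x] at h
    exact h
  have le_sub : ∀ a b : G, sub (sub a b) a = zero := by
    intro a b
    rw [sub3, zz, zx]
  have key : ∀ A B : G, sub B A = zero → sub A (sub A B) = B := by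
    intro A B h
    rw [sub2, h, xz]
  -- (1) → (4)
  have h14 : (∀ (u : G) (w : Fin n → G) (i : Fin n) (x y : G),
        op u (Function.update w i (sub x (sub x y)))
          = sub (op u (Function.update w i x)) (op u (Function.update w i (sub x y)))) →
      (∀ t : G → G, MengerPoly op t → ∀ x y : G,
        t (sub x (sub x y)) = sub (t x) (t (sub x y))) := by
    intro h1 t ht
    induction ht with
    | id => intro x y; rfl
    | comp a b i s _ IH =>
      intro x y
      show op a (Function.update b i (s (sub x (sub x y))))
          = sub (op a (Function.update b i (s x))) (op a (Function.update b i (s (sub x y))))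
      have h3 : sub x (sub x (sub x y)) = sub x y := key x (sub x y) (le_sub x y)
      have hmono0 := IH x (sub x y)
      rw [h3] at hmono0
      -- hmono0 : s (sub x y) = sub (s x) (s (sub x (sub x y)))
      have hBA : sub (s (sub x y)) (s x) = zero := by
        rw [hmono0]; exact le_sub _ _
      have hk : sub (s x) (sub (s x) (s (sub x y))) = s (sub x y) := key _ _ hBA
      have h1' := h1 a b i (s x) (sub (s x) (s (sub x y)))
      rw [hk] at h1'
      rw [IH x y]
      exact h1'
  -- (4) → (3)
  have h43 : (∀ t : G → G, MengerPoly op t → ∀ x y : G,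
        t (sub x (sub x y)) = sub (t x) (t (sub x y))) →
      (∀ t : G → G, MengerPoly op t → ∀ x y : G, sub x y = zero →
        t (sub y x) = sub (t y) (t x)) := by
    intro h4 t ht x y hxy
    have h2 : sub y (sub y x) = x := by
      have h := sub2 x y
      rw [hxy, xz] at h
      exact h.symm
    have h := h4 t ht y (sub y x)
    rw [h2] at h
    exact h
  -- (3) → (2)
  have h32 : (∀ t : G → G, MengerPoly op t → ∀ x y : G, sub x y = zero →
        t (sub y x) = sub (t y) (t x)) →
      (∀ x y : G, sub x y = zero →
        ∀ (u : G) (w : Fin n → G) (i : Fin n),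
          op u (Function.update w i (sub y x))
            = sub (op u (Function.update w i y)) (op u (Function.update w i x))) := by
    intro h3 x y hxy u w i
    exact h3 _ (MengerPoly.comp u w i _ MengerPoly.id) x y hxy
  -- (2) → (1)
  have h21 : (∀ x y : G, sub x y = zero →
        ∀ (u : G) (w : Fin n → G) (i : Fin n),
          op u (Function.update w i (sub y x))
            = sub (op u (Function.update w i y)) (op u (Function.update w i x))) →
      (∀ (u : G) (w : Fin n → G) (i : Fin n) (x y : G),
        op u (Function.update w i (sub x (sub x y)))
          = sub (op u (Function.update w i x)) (op u (Function.update w i (sub x y)))) := by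
    intro h2 u w i x y
    exact h2 (sub x y) x (le_sub x y) u w i
  tfae_finish
end

section
/- In any subtraction Menger algebra of rank n, for every polynomial t ∈ Tₙ(G) and all x,y ∈ G: t(x−y) = t(x) − t(x⋏y), and t(x) − t(y) ≤ t(x−y), where x⋏y denotes x−(x−y) and x ≤ y means x−y=0. -/
/-- In any subtraction Menger algebra of rank `n`, for every polynomial `t` and
all `x, y`: `t(x−y) = t(x) − t(x⋏y)` and `t(x) − t(y) ≤ t(x−y)`
(where `x⋏y = x−(x−y)` and `x ≤ y` means `x−y = 0`). -/
theorem subtraction_menger_poly_sub {G : Type} {n : ℕ}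
    (op : G → (Fin n → G) → G) (sub : G → G → G) (zero : G)
    (superassoc : ∀ (x : G) (y z : Fin n → G),
      op (op x y) z = op x (fun i => op (y i) z))
    (sub1 : ∀ x y : G, sub x (sub y x) = x)
    (sub2 : ∀ x y : G, sub x (sub x y) = sub y (sub y x))
    (sub3 : ∀ x y z : G, sub (sub x y) z = sub (sub x z) y)
    (sub4 : sub zero zero = zero)
    (distrib : ∀ (x y : G) (z : Fin n → G),
      op (sub x y) z = sub (op x z) (op y z))
    (meetax : ∀ (u : G) (w : Fin n → G) (i : Fin n) (x y : G),
      op u (Function.update w i (sub x (sub x y)))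
        = sub (op u (Function.update w i x)) (op u (Function.update w i (sub x y))))
    (steady : ∀ (x y z : G) (t₁ t₂ : G → G), MengerPoly op t₁ → MengerPoly op t₂ →
      sub x y = zero → sub z (t₁ x) = zero → sub z (t₂ y) = zero →
      sub z (t₂ x) = zero)
    :
    ∀ t : G → G, MengerPoly op t → ∀ x y : G,
      t (sub x y) = sub (t x) (t (sub x (sub x y))) ∧
      sub (sub (t x) (t y)) (t (sub x y)) = zero := by
  -- basic subtraction algebra facts
  have L5 : ∀ x y, sub (sub x y) y = sub x y := by
    intro x y
    have h := sub1 (sub x y) y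
    rw [sub1 y x] at h
    exact h
  have D : ∀ x, sub (sub x x) x = sub x x := fun x => L5 x x
  have E : ∀ x, sub (sub x x) (sub x x) = sub x x := fun x => by
    rw [sub3, sub1 x x]
  have e1 : ∀ x y, sub (sub (sub x x) y) x = sub (sub x x) y := fun x y => by
    rw [sub3, D]
  have e3 : ∀ x y, sub x (sub (sub x x) y) = x := fun x y => by
    conv_lhs => rw [← e1 x y]
    exact sub1 x (sub (sub x x) y)
  have e4 : ∀ x y, sub y (sub (sub x x) y) = y := fun x y => by
    conv_lhs => rw [← L5 (sub x x) y]
    exact sub1 y (sub (sub x x) y)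
  have e5 : ∀ x y, sub (sub (sub x x) y) (sub x x) = sub (sub x x) y := fun x y => by
    rw [sub3, E]
  have e6 : ∀ x y, sub (sub x x) (sub (sub x x) y) = sub x x := fun x y => by
    conv_lhs => rw [← e5 x y]
    exact sub1 (sub x x) (sub (sub x x) y)
  have e8 : ∀ x y, sub (sub y y) (sub (sub x x) y) = sub y y := fun x y => by
    rw [sub3, e4]
  have eidem : ∀ x y, sub (sub (sub x x) y) (sub (sub x x) y) = sub (sub x x) y := fun x y => by
    conv_lhs => rw [sub3, e6]
  have ef : ∀ x y, sub (sub (sub x x) y) (sub (sub y y) x) = sub (sub x x) y := fun x y => by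
    rw [sub3, e8 y x]
  have dsw : ∀ x y, sub (sub x x) y = sub (sub y y) x := fun x y => by
    have h := sub2 (sub (sub x x) y) (sub (sub y y) x)
    rw [ef x y, ef y x, eidem x y, eidem y x] at h
    exact h
  -- zero facts
  have zidem : ∀ y, sub (sub zero y) (sub zero y) = sub zero y := fun y => by
    have h := eidem zero y
    rw [sub4] at h
    exact h
  have zz : ∀ y, sub zero (sub zero y) = zero := fun y => by
    have h := e3 zero y
    rw [sub4] at h
    exact h
  have I : ∀ y, sub y (sub y zero) = zero := fun y => by
    have h := sub2 zero y
    rw [zz y] at h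
    exact h.symm
  have szero : ∀ y, sub (sub zero y) zero = sub zero y := fun y => by
    rw [sub3, sub4]
  have Z1 : ∀ y, sub zero y = zero := fun y => by
    have h := I (sub zero y)
    rw [szero y, zidem y] at h
    exact h
  have pz : ∀ y, sub (sub y zero) y = zero := fun y => by
    rw [sub3, dsw y zero, sub4, Z1]
  have Z2 : ∀ y, sub y zero = y := fun y => by
    have h := sub1 y (sub y zero)
    rw [pz y] at h
    exact h
  have Z3 : ∀ x, sub x x = zero := fun x => by
    have h := dsw x zero
    rw [sub4, Z1 x, Z2 (sub x x)] at h
    exact h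
  -- order facts
  have sbl : ∀ x y, sub (sub x y) x = zero := fun x y => by
    rw [sub3, Z3, Z1]
  have letrans : ∀ a m q, sub a m = zero → sub m q = zero → sub a q = zero := by
    intro a m q h1 h2
    have ha : sub m (sub m a) = a := by rw [sub2 m a, h1, Z2]
    calc sub a q = sub (sub m (sub m a)) q := by rw [ha]
      _ = sub (sub m q) (sub m a) := by rw [sub3]
      _ = zero := by rw [h2, Z1]
  have antit : ∀ p m q, sub m q = zero → sub (sub p q) (sub p m) = zero := by
    intro p m q h
    have key : sub (sub p q) (sub p m) = sub (sub m (sub m p)) q := by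
      rw [sub3 p q (sub p m), sub2 p m]
    rw [key]
    have h1 : sub (sub m (sub m p)) m = zero := by rw [sub3, Z3, Z1]
    exact letrans _ m q h1 h
  -- Part 1 by induction on the polynomial
  have part1 : ∀ t : G → G, MengerPoly op t → ∀ x y : G,
      t (sub x y) = sub (t x) (t (sub x (sub x y))) := by
    intro t ht
    induction ht with
    | id =>
      intro x y
      show sub x y = sub x (sub x (sub x y))
      rw [sub2 x (sub x y), sbl x y, Z2]
    | comp a b i t ht ih =>
      intro x y
      show op a (Function.update b i (t (sub x y)))
          = sub (op a (Function.update b i (t x)))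
              (op a (Function.update b i (t (sub x (sub x y)))))
      have h1 : t (sub x (sub x y))
          = sub (t x) (t (sub x (sub x (sub x y)))) := ih x (sub x y)
      have h2 : t (sub x y) = sub (t x) (t (sub x (sub x y))) := ih x y
      rw [h2, h1]
      exact meetax a b i (t x) (t (sub x (sub x (sub x y))))
  -- the theorem
  intro t ht x y
  have pt := part1 t ht
  refine ⟨pt x y, ?_⟩
  have hm : sub (t (sub x (sub x y))) (t y) = zero := by
    rw [sub2 x y, pt y (sub y x), sub3, Z3, Z1]
  have h := antit (t x) (t (sub x (sub x y))) (t y) hm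
  rw [pt x y]
  exact h
end

section
/- In any subtraction algebra, if x ≤ b, y ≤ b and b ≤ a, then b−((b−x)⋏(b−y)) = a−((a−x)⋏(a−y)). -/
/-- In any subtraction algebra, if `x ≤ b`, `y ≤ b` and `b ≤ a`, then
`b−((b−x)⋏(b−y)) = a−((a−x)⋏(a−y))`, where `p⋏q = p−(p−q)` and `p ≤ q`
means `p−q = 0`. -/
theorem subtraction_algebra_join_indep_of_le {G : Type*}
    (sub : G → G → G) (zero : G)
    (sub1 : ∀ x y : G, sub x (sub y x) = x)
    (sub2 : ∀ x y : G, sub x (sub x y) = sub y (sub y x))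
    (sub3 : ∀ x y z : G, sub (sub x y) z = sub (sub x z) y)
    (sub4 : sub zero zero = zero) :
    ∀ x y a b : G, sub x b = zero → sub y b = zero → sub b a = zero →
      sub b (sub (sub b x) (sub (sub b x) (sub b y)))
        = sub a (sub (sub a x) (sub (sub a x) (sub a y))) := by
  -- D2 : (x−x)−(z−x) = x−x
  have D2 : ∀ x z : G, sub (sub x x) (sub z x) = sub x x := by
    intro x z
    have h := sub3 x (sub z x) x
    rw [sub1 x z] at h
    exact h.symm
  -- N : u−(u−(y−y)) = y−y
  have N : ∀ u y : G, sub u (sub u (sub y y)) = sub y y := by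
    intro u y
    have h1 : sub (sub y y) u = sub (sub y u) y := sub3 y y u
    calc sub u (sub u (sub y y)) = sub (sub y y) (sub (sub y y) u) := sub2 u (sub y y)
      _ = sub (sub y y) (sub (sub y u) y) := by rw [h1]
      _ = sub y y := D2 y (sub y u)
  -- constancy : x−x = y−y
  have const : ∀ x y : G, sub x x = sub y y := by
    intro x y
    have h1 : sub (sub x x) (sub (sub x x) (sub y y)) = sub y y := N (sub x x) y
    have h2 : sub (sub y y) (sub (sub y y) (sub x x)) = sub x x := N (sub y y) x
    have h3 := sub2 (sub x x) (sub y y)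
    rw [h1, h2] at h3
    exact h3.symm
  -- x−x = zero
  have sub_self : ∀ x : G, sub x x = zero := by
    intro x; rw [const x zero, sub4]
  -- x−zero = x
  have sub_zero : ∀ x : G, sub x zero = x := by
    intro x; rw [← sub_self x]; exact sub1 x x
  -- zero−x = zero
  have zero_sub : ∀ x : G, sub zero x = zero := by
    intro x
    have h := sub1 zero x
    rw [sub_zero x] at h
    exact h
  -- transitivity : x≤y, y≤z ⇒ x≤z
  have trans : ∀ x y z : G, sub x y = zero → sub y z = zero → sub x z = zero := by
    intro x y z hxy hyz
    have h1 : sub (sub x z) (sub x y) = sub (sub x (sub x y)) z := by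
      rw [sub3 x z (sub x y)]
    have h2 : sub (sub x (sub x y)) z = sub (sub y (sub y x)) z := by rw [sub2 x y]
    have h3 : sub (sub y (sub y x)) z = sub (sub y z) (sub y x) := by
      rw [sub3 y (sub y x) z]
    have : sub (sub x z) (sub x y) = zero := by
      rw [h1, h2, h3, hyz, zero_sub]
    rwa [hxy, sub_zero] at this
  -- antisymmetry
  have antisymm : ∀ x y : G, sub x y = zero → sub y x = zero → x = y := by
    intro x y hxy hyx
    have h := sub2 x y
    rw [hxy, hyx, sub_zero, sub_zero] at h
    exact h
  -- (x−y)−x = zero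
  have sub_le : ∀ x y : G, sub (sub x y) x = zero := by
    intro x y
    rw [sub3 x y x, sub_self, zero_sub]
  -- anti-monotonicity : x≤y ⇒ z−y ≤ z−x
  have mono : ∀ x y z : G, sub x y = zero → sub (sub z y) (sub z x) = zero := by
    intro x y z hxy
    calc sub (sub z y) (sub z x) = sub (sub z (sub z x)) y := sub3 z y (sub z x)
      _ = sub (sub x (sub x z)) y := by rw [sub2 z x]
      _ = sub (sub x y) (sub x z) := by rw [sub3 x (sub x z) y]
      _ = zero := by rw [hxy, zero_sub]
  -- x ≤ c ⇒ c−(c−x) = x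
  have sub_sub_cancel : ∀ x c : G, sub x c = zero → sub c (sub c x) = x := by
    intro x c hxc
    rw [sub2 c x, hxc, sub_zero]
  -- meet lower bounds
  have meet_le_left : ∀ p q : G, sub (sub p (sub p q)) p = zero := fun p q => sub_le p (sub p q)
  have meet_le_right : ∀ p q : G, sub (sub p (sub p q)) q = zero := by
    intro p q
    rw [sub3 p (sub p q) q, sub_self]
  -- meet greatest lower bound
  have le_meet : ∀ w p q : G, sub w p = zero → sub w q = zero →
      sub w (sub p (sub p q)) = zero := by
    intro w p q hwp hwq
    have h1 : sub (sub p q) (sub p w) = zero := mono w q p hwq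
    have h2 : sub (sub p (sub p w)) (sub p (sub p q)) = zero := mono (sub p q) (sub p w) p h1
    rwa [sub_sub_cancel w p hwp] at h2
  -- join (within c) upper bound and leastness
  -- j c = c − ((c−x)⋏(c−y))
  intro x y a b hxb hyb hba
  set jb := sub b (sub (sub b x) (sub (sub b x) (sub b y))) with hjb
  set ja := sub a (sub (sub a x) (sub (sub a x) (sub a y))) with hja
  have hxa : sub x a = zero := trans x b a hxb hba
  have hya : sub y a = zero := trans y b a hyb hba
  -- generic facts about j c for x,y ≤ c
  have ub : ∀ c : G, sub x c = zero → sub y c = zero →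
      sub x (sub c (sub (sub c x) (sub (sub c x) (sub c y)))) = zero ∧
      sub y (sub c (sub (sub c x) (sub (sub c x) (sub c y)))) = zero := by
    intro c hxc hyc
    set p := sub c x
    set q := sub c y
    set m := sub p (sub p q) with hm
    constructor
    · have h1 : sub m p = zero := meet_le_left p q
      have h2 : sub (sub c p) (sub c m) = zero := mono m p c h1
      rwa [sub_sub_cancel x c hxc] at h2
    · have h1 : sub m q = zero := meet_le_right p q
      have h2 : sub (sub c q) (sub c m) = zero := mono m q c h1
      rwa [sub_sub_cancel y c hyc] at h2
  have least : ∀ c u : G, sub x u = zero → sub y u = zero →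
      sub (sub c (sub (sub c x) (sub (sub c x) (sub c y)))) u = zero := by
    intro c u hxu hyu
    set p := sub c x
    set q := sub c y
    set m := sub p (sub p q) with hm
    have h1 : sub (sub c u) p = zero := mono x u c hxu
    have h2 : sub (sub c u) q = zero := mono y u c hyu
    have h3 : sub (sub c u) m = zero := le_meet (sub c u) p q h1 h2
    have h4 : sub (sub c m) (sub c (sub c u)) = zero := mono (sub c u) m c h3
    have h5 : sub (sub c (sub c u)) u = zero := by
      rw [sub3 c (sub c u) u, sub_self]
    exact trans (sub c m) (sub c (sub c u)) u h4 h5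
  have hb := ub b hxb hyb
  have ha := ub a hxa hya
  have h1 : sub jb ja = zero := least b ja ha.1 ha.2
  have h2 : sub ja jb = zero := least a jb hb.1 hb.2
  exact antisymm jb ja h1 h2
end

section
/- In any subtraction algebra, if x ≤ a, y ≤ a, x ≤ b and y ≤ b, then b−((b−x)⋏(b−y)) = a−((a−x)⋏(a−y)); that is, the value a−((a−x)⋏(a−y)) does not depend on the choice of the common upper bound a of x and y. -/
/-- In any subtraction algebra, if `x ≤ a`, `y ≤ a`, `x ≤ b` and `y ≤ b`, then
`b−((b−x)⋏(b−y)) = a−((a−x)⋏(a−y))`: the value `a−((a−x)⋏(a−y))` does not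
depend on the choice of the common upper bound `a` of `x` and `y`.
Here `p⋏q = p−(p−q)` and `p ≤ q` means `p−q = 0`. -/
theorem subtraction_algebra_join_indep {G : Type*}
    (sub : G → G → G) (zero : G)
    (sub1 : ∀ x y : G, sub x (sub y x) = x)
    (sub2 : ∀ x y : G, sub x (sub x y) = sub y (sub y x))
    (sub3 : ∀ x y z : G, sub (sub x y) z = sub (sub x z) y)
    (sub4 : sub zero zero = zero) :
    ∀ x y a b : G,
      sub x a = zero → sub y a = zero → sub x b = zero → sub y b = zero →
      sub b (sub (sub b x) (sub (sub b x) (sub b y)))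
        = sub a (sub (sub a x) (sub (sub a x) (sub a y))) := by
  -- x - x is a constant
  have zz : ∀ x y : G, sub x x = sub y y := by
    intro x y
    calc sub x x
        = sub x (sub x (sub y x)) := by rw [sub1 x y]
      _ = sub (sub y x) (sub (sub y x) x) := sub2 x (sub y x)
      _ = sub (sub y x) (sub (sub y x) (sub x (sub y x))) := by rw [sub1 x y]
      _ = sub (sub y x) (sub y x) := by rw [sub1 (sub y x) x]
      _ = sub (sub y x) (sub (sub y (sub x y)) x) := by rw [sub1 y x]
      _ = sub (sub y x) (sub (sub y x) (sub x y)) := by rw [sub3 y (sub x y) x]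
      _ = sub (sub x y) (sub (sub x y) (sub y x)) := sub2 (sub y x) (sub x y)
      _ = sub (sub x y) (sub (sub x (sub y x)) y) := by rw [sub3 x (sub y x) y]
      _ = sub (sub x y) (sub x y) := by rw [sub1 x y]
      _ = sub (sub x y) (sub (sub x y) (sub y (sub x y))) := by rw [sub1 (sub x y) y]
      _ = sub (sub x y) (sub (sub x y) y) := by rw [sub1 y x]
      _ = sub y (sub y (sub x y)) := sub2 (sub x y) y
      _ = sub y y := by rw [sub1 y x]
  have z0 : ∀ u : G, sub u u = zero := fun u => (zz u zero).trans sub4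
  have s0 : ∀ u : G, sub u zero = u := by
    intro u; rw [← z0 u]; exact sub1 u u
  have zs : ∀ u : G, sub zero u = zero := by
    intro u; have h := sub1 zero u; rwa [s0 u] at h
  have l5 : ∀ u v : G, sub (sub u v) u = zero := by
    intro u v; rw [sub3 u v u, z0 u, zs]
  have from_le : ∀ u v : G, sub u v = zero → u = sub v (sub v u) := by
    intro u v h
    calc u = sub u zero := (s0 u).symm
      _ = sub u (sub u v) := by rw [h]
      _ = sub v (sub v u) := sub2 u v
  have antisymm : ∀ u v : G, sub u v = zero → sub v u = zero → u = v := by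
    intro u v h1 h2
    rw [from_le u v h1, h2, s0]
  have letrans : ∀ u v w : G, sub u v = zero → sub v w = zero → sub u w = zero := by
    intro u v w h1 h2
    rw [from_le u v h1, sub3 v (sub v u) w, h2, zs]
  have a6 : ∀ u v w : G, sub (sub (sub u v) (sub w v)) (sub u w) = zero := by
    intro u v w
    calc sub (sub (sub u v) (sub w v)) (sub u w)
        = sub (sub (sub u v) (sub u w)) (sub w v) := sub3 (sub u v) (sub w v) (sub u w)
      _ = sub (sub (sub u (sub u w)) v) (sub w v) := by rw [sub3 u v (sub u w)]
      _ = sub (sub (sub w (sub w u)) v) (sub w v) := by rw [sub2 u w]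
      _ = sub (sub (sub w v) (sub w u)) (sub w v) := by rw [sub3 w (sub w u) v]
      _ = zero := l5 _ _
  -- monotonicity: u ≤ v → w - v ≤ w - u
  have m2 : ∀ u v w : G, sub u v = zero → sub (sub w v) (sub w u) = zero := by
    intro u v w h
    have h2 := a6 w v u
    rwa [h, s0] at h2
  have meet_le_left : ∀ u v : G, sub (sub u (sub u v)) u = zero := fun u v => l5 u (sub u v)
  have meet_le_right : ∀ u v : G, sub (sub u (sub u v)) v = zero := by
    intro u v; rw [sub2 u v]; exact l5 v (sub v u)
  have le_meet : ∀ u v w : G, sub w u = zero → sub w v = zero →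
      sub w (sub u (sub u v)) = zero := by
    intro u v w h1 h2
    have e1 : sub (sub u v) (sub u w) = zero := m2 w v u h2
    have e2 : sub (sub u (sub u w)) (sub u (sub u v)) = zero := m2 (sub u v) (sub u w) u e1
    rwa [← from_le w u h1] at e2
  intro x y a b hxa hya hxb hyb
  -- J c = c - ((c-x) ⋏ (c-y)) is an upper bound of x and y, below c,
  -- and below any upper bound w of x,y with w ≤ c.
  have ub1 : ∀ c : G, sub x c = zero →
      sub x (sub c (sub (sub c x) (sub (sub c x) (sub c y)))) = zero := by
    intro c h
    have e1 : sub (sub (sub c x) (sub (sub c x) (sub c y))) (sub c x) = zero :=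
      meet_le_left (sub c x) (sub c y)
    have e2 := m2 _ _ c e1
    rwa [← from_le x c h] at e2
  have ub2 : ∀ c : G, sub y c = zero →
      sub y (sub c (sub (sub c x) (sub (sub c x) (sub c y)))) = zero := by
    intro c h
    have e1 : sub (sub (sub c x) (sub (sub c x) (sub c y))) (sub c y) = zero :=
      meet_le_right (sub c x) (sub c y)
    have e2 := m2 _ _ c e1
    rwa [← from_le y c h] at e2
  have lub : ∀ c w : G, sub x w = zero → sub y w = zero → sub w c = zero →
      sub (sub c (sub (sub c x) (sub (sub c x) (sub c y)))) w = zero := by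
    intro c w hxw hyw hwc
    have e1 : sub (sub c w) (sub c x) = zero := m2 x w c hxw
    have e2 : sub (sub c w) (sub c y) = zero := m2 y w c hyw
    have e3 : sub (sub c w) (sub (sub c x) (sub (sub c x) (sub c y))) = zero :=
      le_meet (sub c x) (sub c y) (sub c w) e1 e2
    have e4 := m2 (sub c w) (sub (sub c x) (sub (sub c x) (sub c y))) c e3
    rwa [← from_le w c hwc] at e4
  -- b ⋏ a is a common upper bound of x, y below both a and b
  have hxm : sub x (sub b (sub b a)) = zero := le_meet b a x hxb hxa
  have hym : sub y (sub b (sub b a)) = zero := le_meet b a y hyb hya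
  have hJa_m : sub (sub a (sub (sub a x) (sub (sub a x) (sub a y)))) (sub b (sub b a)) = zero :=
    lub a (sub b (sub b a)) hxm hym (meet_le_right b a)
  have hJa_b : sub (sub a (sub (sub a x) (sub (sub a x) (sub a y)))) b = zero :=
    letrans _ _ _ hJa_m (meet_le_left b a)
  -- a ⋏ b side
  have hxm' : sub x (sub a (sub a b)) = zero := le_meet a b x hxa hxb
  have hym' : sub y (sub a (sub a b)) = zero := le_meet a b y hya hyb
  have hJb_m' : sub (sub b (sub (sub b x) (sub (sub b x) (sub b y)))) (sub a (sub a b)) = zero :=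
    lub b (sub a (sub a b)) hxm' hym' (meet_le_right a b)
  have hJb_a : sub (sub b (sub (sub b x) (sub (sub b x) (sub b y)))) a = zero :=
    letrans _ _ _ hJb_m' (meet_le_left a b)
  have h1 : sub (sub b (sub (sub b x) (sub (sub b x) (sub b y))))
      (sub a (sub (sub a x) (sub (sub a x) (sub a y)))) = zero :=
    lub b _ (ub1 a hxa) (ub2 a hya) hJa_b
  have h2 : sub (sub a (sub (sub a x) (sub (sub a x) (sub a y))))
      (sub b (sub (sub b x) (sub (sub b x) (sub b y)))) = zero :=
    lub a _ (ub1 b hxb) (ub2 b hyb) hJb_a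
  exact antisymm _ _ h1 h2
end

section
/- In any subtraction Menger algebra of rank n, suppose x ≤ a and y ≤ a, and let x⋎y denote a−((a−x)⋏(a−y)) (this is independent of the choice of common upper bound a). Then for all z̄ = (z₁,…,zₙ) ∈ Gⁿ one has x[z̄] ≤ a[z̄], y[z̄] ≤ a[z̄], and (x⋎y)[z̄] = a[z̄]−((a[z̄]−x[z̄])⋏(a[z̄]−y[z̄])) = x[z̄]⋎y[z̄]; and for all u ∈ G, w̄ ∈ Gⁿ, 1 ≤ i ≤ n one has u[w̄|ᵢx] ≤ u[w̄|ᵢa], u[w̄|ᵢy] ≤ u[w̄|ᵢa], and u[w̄|ᵢ(x⋎y)] = u[w̄|ᵢa]−((u[w̄|ᵢa]−u[w̄|ᵢx])⋏(u[w̄|ᵢa]−u[w̄|ᵢy])) = u[w̄|ᵢx]⋎u[w̄|ᵢy]. -/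
/-- `x ⋏ y = x − (x − y)`. -/
def smeet {G : Type} (sub : G → G → G) (x y : G) : G := sub x (sub x y)

/-- For `x, y ≤ c`, the join `x ⋎ y` computed in the segment `[0, c]`:
`x ⋎ y = c − ((c−x) ⋏ (c−y))`. -/
def svee {G : Type} (sub : G → G → G) (c x y : G) : G :=
  sub c (smeet sub (sub c x) (sub c y))

/-- In a subtraction Menger algebra of rank `n`, if `x ≤ a` and `y ≤ a`
(so that `x⋎y = a−((a−x)⋏(a−y))` exists), then the joins
`x[z̄]⋎y[z̄]` and `u[w̄|ᵢx]⋎u[w̄|ᵢy]` exist and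
`(x⋎y)[z̄] = x[z̄]⋎y[z̄]`, `u[w̄|ᵢ(x⋎y)] = u[w̄|ᵢx]⋎u[w̄|ᵢy]`. -/
theorem subtraction_menger_join_op {G : Type} {n : ℕ}
    (op : G → (Fin n → G) → G) (sub : G → G → G) (zero : G)
    (superassoc : ∀ (x : G) (y z : Fin n → G),
      op (op x y) z = op x (fun i => op (y i) z))
    (sub1 : ∀ x y : G, sub x (sub y x) = x)
    (sub2 : ∀ x y : G, sub x (sub x y) = sub y (sub y x))
    (sub3 : ∀ x y z : G, sub (sub x y) z = sub (sub x z) y)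
    (sub4 : sub zero zero = zero)
    (distrib : ∀ (x y : G) (z : Fin n → G),
      op (sub x y) z = sub (op x z) (op y z))
    (meetax : ∀ (u : G) (w : Fin n → G) (i : Fin n) (x y : G),
      op u (Function.update w i (sub x (sub x y)))
        = sub (op u (Function.update w i x)) (op u (Function.update w i (sub x y))))
    (steady : ∀ (x y z : G) (t₁ t₂ : G → G), MengerPoly op t₁ → MengerPoly op t₂ →
      sub x y = zero → sub z (t₁ x) = zero → sub z (t₂ y) = zero →
      sub z (t₂ x) = zero)
    (x y a : G) (hxa : sub x a = zero) (hya : sub y a = zero) :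
    (∀ z : Fin n → G,
      sub (op x z) (op a z) = zero ∧
      sub (op y z) (op a z) = zero ∧
      op (svee sub a x y) z = svee sub (op a z) (op x z) (op y z)) ∧
    (∀ (u : G) (w : Fin n → G) (i : Fin n),
      sub (op u (Function.update w i x)) (op u (Function.update w i a)) = zero ∧
      sub (op u (Function.update w i y)) (op u (Function.update w i a)) = zero ∧
      op u (Function.update w i (svee sub a x y))
        = svee sub (op u (Function.update w i a))
            (op u (Function.update w i x)) (op u (Function.update w i y))) := by
  -- ===== subtraction algebra basics =====
  have hself : ∀ p : G, sub p (sub p p) = p := fun p => sub1 p p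
  have hcp : ∀ p : G, sub (sub p p) p = sub p p := by
    intro p
    have h := sub1 (sub p p) p
    rwa [hself p] at h
  have hee : ∀ p : G, sub (sub p p) (sub p p) = sub p p := by
    intro p
    have h := sub2 (sub p p) p
    rw [hcp p, hself p] at h
    exact h
  have star : ∀ p q : G, sub (sub (sub p p) q) (sub (sub p p) q) = sub p p := by
    intro p q
    have hAp : sub (sub (sub p p) q) p = sub (sub p p) q := by
      rw [sub3 (sub p p) q p, hcp p]
    have hpA : sub p (sub (sub p p) q) = p := by
      rw [sub3 p p q]
      exact sub1 p (sub p q)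
    have h := sub2 (sub (sub p p) q) p
    rw [hAp, hpA] at h
    exact h
  have const : ∀ p q : G, sub p p = sub q q := by
    intro p q
    have h1 : sub (sub q q) (sub (sub p p) (sub q q)) = sub q q :=
      sub1 (sub q q) (sub p p)
    have h2 : sub (sub (sub p p) (sub q q)) (sub q q) = sub (sub p p) (sub q q) := by
      have h := sub1 (sub (sub p p) (sub q q)) (sub q q)
      rwa [h1] at h
    have h3 := sub2 (sub (sub p p) (sub q q)) (sub q q)
    rw [h2, h1, hee q] at h3
    have h4 := star p (sub q q)
    rw [h3] at h4
    exact h4.symm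
  have xx0 : ∀ p : G, sub p p = zero := fun p => (const p zero).trans sub4
  have sub_zero : ∀ p : G, sub p zero = p := by
    intro p
    have h := hself p
    rwa [xx0 p] at h
  have zero_sub : ∀ p : G, sub zero p = zero := by
    intro p
    have h := hcp p
    rwa [xx0 p] at h
  have ssp : ∀ p q : G, sub (sub p q) p = zero := by
    intro p q
    rw [sub3 p q p, xx0 p, zero_sub q]
  have triple : ∀ p q : G, sub p (sub p (sub p q)) = sub p q := by
    intro p q
    have h := sub2 p (sub p q)
    rw [ssp p q, sub_zero (sub p q)] at h
    exact h
  have antisym : ∀ p q : G, sub p q = zero → sub q p = zero → p = q := by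
    intro p q h1 h2
    have h := sub2 p q
    rw [h1, h2, sub_zero p, sub_zero q] at h
    exact h
  have le_rep : ∀ p q : G, sub p q = zero → sub q (sub q p) = p := by
    intro p q h
    have h2 := sub2 p q
    rw [h, sub_zero p] at h2
    exact h2.symm
  have le_trans' : ∀ p q r : G, sub p q = zero → sub q r = zero → sub p r = zero := by
    intro p q r h1 h2
    have hrep := le_rep p q h1
    rw [← hrep, sub3 q (sub q p) r, h2, zero_sub]
  have mono_first : ∀ p q r : G, sub p q = zero → sub (sub p r) (sub q r) = zero := by
    intro p q r h
    have hrep := le_rep p q h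
    rw [← hrep, sub3 q (sub q p) r]
    exact ssp (sub q r) (sub q p)
  have anti_second : ∀ p q q' : G, sub q q' = zero →
      sub (sub p q') (sub p q) = zero := by
    intro p q q' h
    rw [sub3 p q' (sub p q), sub2 p q]
    exact le_trans' (sub q (sub q p)) q q' (ssp q (sub q p)) h
  have le_meet : ∀ d E F : G, sub d E = zero → sub d F = zero →
      sub d (sub E (sub E F)) = zero := by
    intro d E F hdE hdF
    have h1 : sub (sub E F) (sub E d) = zero := anti_second E d F hdF
    have h2 := anti_second E (sub E F) (sub E d) h1
    rwa [le_rep d E hdE] at h2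
  have sub_idem : ∀ p q : G, sub (sub p q) q = sub p q := by
    intro p q
    apply antisym
    · exact ssp (sub p q) q
    · have h := sub2 (sub p q) q
      rw [sub1 q p, xx0 q] at h
      exact h
  -- ===== Menger-side lemmas =====
  have M1 : ∀ (u : G) (w : Fin n → G) (i : Fin n) (p q : G), sub p q = zero →
      sub (op u (Function.update w i p)) (op u (Function.update w i q)) = zero := by
    intro u w i p q h
    have hm := meetax u w i q p
    rw [le_rep p q h] at hm
    rw [hm]
    exact ssp _ _
  have M2 : ∀ (u : G) (w : Fin n → G) (i : Fin n) (p c : G), sub p c = zero →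
      op u (Function.update w i (sub c p)) =
        sub (op u (Function.update w i c)) (op u (Function.update w i p)) := by
    intro u w i p c h
    have hm := meetax u w i c (sub c p)
    rwa [le_rep p c h] at hm
  have M4 : ∀ (u : G) (w : Fin n → G) (i : Fin n) (p q c : G),
      sub p c = zero → sub q c = zero →
      op u (Function.update w i (sub q p)) =
        sub (op u (Function.update w i q)) (op u (Function.update w i p)) := by
    intro u w i p q c hp hq
    apply antisym
    · have h1 := M1 u w i (sub q p) q (ssp q p)
      have h3 := M1 u w i (sub q p) (sub c p) (mono_first q c p hq)
      rw [M2 u w i p c hp] at h3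
      have ga := mono_first (op u (Function.update w i (sub q p)))
        (op u (Function.update w i q))
        (sub (op u (Function.update w i q)) (op u (Function.update w i p))) h1
      have gb : sub (sub (op u (Function.update w i q))
          (sub (op u (Function.update w i q)) (op u (Function.update w i p))))
          (op u (Function.update w i p)) = zero := by
        rw [sub2 (op u (Function.update w i q)) (op u (Function.update w i p))]
        exact ssp _ _
      have hgY := le_trans' _ _ _ ga gb
      have hgW := ssp (op u (Function.update w i (sub q p)))
        (sub (op u (Function.update w i q)) (op u (Function.update w i p)))
      have hgAY := le_trans' _ _ _ hgW h3
      have hg := le_meet _ _ _ hgAY hgY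
      rwa [sub_idem (op u (Function.update w i c)) (op u (Function.update w i p)),
        xx0 (sub (op u (Function.update w i c)) (op u (Function.update w i p))),
        sub_zero] at hg
    · have hm := meetax u w i q (sub q p)
      rw [triple q p] at hm
      have hk : sub (sub q (sub q p)) p = zero := by
        rw [sub2 q p]
        exact ssp p (sub p q)
      have hTk := M1 u w i (sub q (sub q p)) p hk
      have h5 := anti_second (op u (Function.update w i q))
        (op u (Function.update w i (sub q (sub q p))))
        (op u (Function.update w i p)) hTk
      rw [← hm] at h5
      exact h5
  have h0z : ∀ z : Fin n → G, op zero z = zero := by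
    intro z
    have h := distrib a a z
    rw [xx0 a, xx0 (op a z)] at h
    exact h
  -- ===== assembling the goals =====
  refine ⟨fun z => ⟨?_, ?_, ?_⟩, fun u w i => ⟨?_, ?_, ?_⟩⟩
  · rw [← distrib x a z, hxa]
    exact h0z z
  · rw [← distrib y a z, hya]
    exact h0z z
  · simp only [svee, smeet, distrib]
  · exact M1 u w i x a hxa
  · exact M1 u w i y a hya
  · have hTya := M1 u w i y a hya
    have hma : sub (sub (sub a x) (sub (sub a x) (sub a y))) a = zero :=
      le_trans' _ (sub a x) _ (ssp (sub a x) (sub (sub a x) (sub a y))) (ssp a x)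
    have step1 := M2 u w i (sub (sub a x) (sub (sub a x) (sub a y))) a hma
    have step2 := meetax u w i (sub a x) (sub a y)
    have step3 : sub (sub a x) (sub a y) = sub y x := by
      rw [sub3 a x (sub a y), le_rep y a hya]
    have step4 := M4 u w i x y a hxa hya
    have step6 : sub (sub (op u (Function.update w i a)) (op u (Function.update w i x)))
        (sub (op u (Function.update w i a)) (op u (Function.update w i y)))
        = sub (op u (Function.update w i y)) (op u (Function.update w i x)) := by
      rw [sub3 (op u (Function.update w i a)) (op u (Function.update w i x))
        (sub (op u (Function.update w i a)) (op u (Function.update w i y))),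
        le_rep (op u (Function.update w i y)) (op u (Function.update w i a)) hTya]
    simp only [svee, smeet]
    rw [step1, step2, step3, step4, M2 u w i x a hxa, step6]
end

section
/- In any subtraction Menger algebra of rank n, if x ≤ a and y ≤ a, then for every polynomial t ∈ Tₙ(G) one has t(x) ≤ t(a), t(y) ≤ t(a), and t(x⋎y) = t(x)⋎t(y), i.e. t(a−((a−x)⋏(a−y))) = t(a)−((t(a)−t(x))⋏(t(a)−t(y))). -/
/-- In a subtraction Menger algebra of rank `n`, if `x ≤ a` and `y ≤ a`, then
for every polynomial `t`: `t(x) ≤ t(a)`, `t(y) ≤ t(a)` and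
`t(x⋎y) = t(x)⋎t(y)`, i.e.
`t(a−((a−x)⋏(a−y))) = t(a)−((t(a)−t(x))⋏(t(a)−t(y)))`. -/
theorem subtraction_menger_join_poly {G : Type} {n : ℕ}
    (op : G → (Fin n → G) → G) (sub : G → G → G) (zero : G)
    (superassoc : ∀ (x : G) (y z : Fin n → G),
      op (op x y) z = op x (fun i => op (y i) z))
    (sub1 : ∀ x y : G, sub x (sub y x) = x)
    (sub2 : ∀ x y : G, sub x (sub x y) = sub y (sub y x))
    (sub3 : ∀ x y z : G, sub (sub x y) z = sub (sub x z) y)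
    (sub4 : sub zero zero = zero)
    (distrib : ∀ (x y : G) (z : Fin n → G),
      op (sub x y) z = sub (op x z) (op y z))
    (meetax : ∀ (u : G) (w : Fin n → G) (i : Fin n) (x y : G),
      op u (Function.update w i (sub x (sub x y)))
        = sub (op u (Function.update w i x)) (op u (Function.update w i (sub x y))))
    (steady : ∀ (x y z : G) (t₁ t₂ : G → G), MengerPoly op t₁ → MengerPoly op t₂ →
      sub x y = zero → sub z (t₁ x) = zero → sub z (t₂ y) = zero →
      sub z (t₂ x) = zero)
    (x y a : G) (hxa : sub x a = zero) (hya : sub y a = zero) :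
    ∀ t : G → G, MengerPoly op t →
      sub (t x) (t a) = zero ∧
      sub (t y) (t a) = zero ∧
      t (svee sub a x y) = svee sub (t a) (t x) (t y) := by
  -- ## Pure subtraction-algebra facts
  have F3 : ∀ u v : G, sub (sub u v) v = sub u v := by
    intro u v
    have h := sub1 (sub u v) v
    rwa [sub1 v u] at h
  have F2 : ∀ d : G, sub (sub d d) d = sub d d := by
    intro d
    have h := sub1 (sub d d) d
    rwa [sub1 d d] at h
  have Z : ∀ c : G, sub c c = zero := by
    have zuniv : ∀ d b : G, sub d d = sub b b := by
      intro d b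
      have h1 : sub (sub d d) b = sub (sub d b) d := sub3 d d b
      have h2 : sub d (sub (sub d d) b) = d := by rw [h1]; exact sub1 d (sub d b)
      have h3 : sub b (sub (sub d d) b) = b := sub1 b (sub d d)
      have h4 : sub (sub (sub d d) b) d = sub (sub d d) b := by
        rw [sub3, F2]
      have h5 : sub (sub (sub d d) b) b = sub (sub d d) b := F3 _ _
      calc sub d d = sub d (sub d (sub (sub d d) b)) := by rw [h2]
        _ = sub (sub (sub d d) b) (sub (sub (sub d d) b) d) := sub2 d (sub (sub d d) b)
        _ = sub (sub (sub d d) b) (sub (sub (sub d d) b) b) := by rw [h4, h5]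
        _ = sub b (sub b (sub (sub d d) b)) := (sub2 b (sub (sub d d) b)).symm
        _ = sub b b := by rw [h3]
    intro c
    exact (zuniv c zero).trans sub4
  have A1 : ∀ u : G, sub u zero = u := by
    intro u
    have h := sub1 u u
    rwa [Z] at h
  have A2 : ∀ u : G, sub zero u = zero := by
    intro u
    have h : sub (sub u u) u = sub u u := F2 u
    rwa [Z] at h
  have M1 : ∀ u v : G, sub (sub u v) u = zero := by
    intro u v
    have h := sub3 u v u
    rw [Z, A2] at h
    exact h
  have CAPEQ : ∀ u v : G, sub u v = zero → sub v (sub v u) = u := by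
    intro u v h
    rw [sub2 v u, h, A1]
  have L8 : ∀ u v : G, sub u (sub u (sub u v)) = sub u v := by
    intro u v; exact CAPEQ (sub u v) u (M1 u v)
  have TRANS : ∀ u v w : G, sub u v = zero → sub v w = zero → sub u w = zero := by
    intro u v w h1 h2
    have e : sub u w = sub (sub v (sub v u)) w := by rw [CAPEQ u v h1]
    rw [e, sub3, h2, A2]
  have ANTISYM : ∀ u v : G, sub u v = zero → sub v u = zero → u = v := by
    intro u v h1 h2
    have e := CAPEQ u v h1
    rw [h2, A1] at e
    exact e.symm
  have GLB : ∀ z p q : G, sub z p = zero → sub z q = zero →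
      sub z (sub p (sub p q)) = zero := by
    intro z p q hp hq
    rw [sub2 p q]
    have e : sub z (sub q (sub q p)) = sub (sub q (sub q z)) (sub q (sub q p)) := by
      rw [CAPEQ z q hq]
    rw [e, sub3, L8, sub3, CAPEQ z q hq]
    exact hp
  have DISJ2 : ∀ p q : G, sub p (sub p (sub q p)) = zero := by
    intro p q
    rw [sub1 p q]
    exact Z p
  have DISJLE : ∀ z u v : G, sub z u = zero → sub z (sub z v) = zero →
      sub z (sub u v) = zero := by
    intro z u v hz hd
    have e1 : sub z (sub u v) = sub (sub u (sub u v)) (sub u z) := by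
      have e0 : sub z (sub u v) = sub (sub u (sub u z)) (sub u v) := by
        rw [CAPEQ z u hz]
      rw [e0, sub3]
    have w1 : sub (sub z (sub u v)) z = zero := M1 z (sub u v)
    have w2 : sub (sub z (sub u v)) v = zero := by
      rw [e1]
      have a1 : sub (sub (sub u (sub u v)) (sub u z)) (sub u (sub u v)) = zero := M1 _ _
      have a2 : sub (sub u (sub u v)) v = zero := by
        rw [sub2 u v]; exact M1 v (sub v u)
      exact TRANS _ _ _ a1 a2
    have w3 := GLB _ z v w1 w2
    rw [hd, A1] at w3
    exact w3
  have SEP : ∀ A B c : G, sub A c = zero → sub B c = zero →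
      sub A (sub A B) = zero → sub A (sub c B) = zero := by
    intro A B c hA hB hAB
    have e : sub A (sub c B) = sub B (sub c A) := by
      have e0 : sub A (sub c B) = sub (sub c (sub c A)) (sub c B) := by
        rw [CAPEQ A c hA]
      rw [e0, sub3, sub2 c B, hB, A1]
    have w1 : sub (sub A (sub c B)) A = zero := M1 _ _
    have w2 : sub (sub A (sub c B)) B = zero := by rw [e]; exact M1 _ _
    have w3 := GLB _ A B w1 w2
    rw [hAB, A1] at w3
    exact w3
  -- ## One-step (elementary translation) facts, for any f satisfying the meet axiom
  have fmono : ∀ f : G → G, (∀ u v : G, f (sub u (sub u v)) = sub (f u) (f (sub u v))) →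
      ∀ d e : G, sub d e = zero → sub (f d) (f e) = zero := by
    intro f hm d e h
    have m := hm e d
    have hed : sub e (sub e d) = d := by rw [sub2 e d, h, A1]
    rw [hed] at m
    rw [m]
    exact M1 _ _
  have fdiff : ∀ f : G → G, (∀ u v : G, f (sub u (sub u v)) = sub (f u) (f (sub u v))) →
      ∀ d e : G, sub d e = zero → sub (f e) (f d) = f (sub e d) := by
    intro f hm d e h
    have m := hm e d
    have hed : sub e (sub e d) = d := by rw [sub2 e d, h, A1]
    rw [hed] at m
    have hle : sub (f (sub e d)) (f e) = zero := fmono f hm (sub e d) e (M1 e d)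
    rw [m]
    exact CAPEQ _ _ hle
  have onestep : ∀ f : G → G, (∀ u v : G, f (sub u (sub u v)) = sub (f u) (f (sub u v))) →
      ∀ p q c : G, sub p c = zero → sub q c = zero →
      f (svee sub c p q) = svee sub (f c) (f p) (f q) := by
    intro f hm p q c hp hq
    have hPc : sub (sub c p) c = zero := M1 c p
    have hBP : sub (sub (sub c p) (sub c q)) (sub c p) = zero := M1 _ _
    have hBc : sub (sub (sub c p) (sub c q)) c = zero := TRANS _ _ _ hBP hPc
    have hmP : sub (sub (sub c p) (sub (sub c p) (sub c q))) (sub c p) = zero := M1 _ _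
    have hmQ : sub (sub (sub c p) (sub (sub c p) (sub c q))) (sub c q) = zero := by
      rw [sub2 (sub c p) (sub c q)]
      exact M1 _ _
    have hmc : sub (sub (sub c p) (sub (sub c p) (sub c q))) c = zero := TRANS _ _ _ hmP hPc
    have hQc : sub (sub c q) c = zero := M1 c q
    -- `f` applied to the meet (c−p)⋏(c−q):
    have hFm : f (sub (sub c p) (sub (sub c p) (sub c q)))
        = sub (f (sub c p)) (f (sub (sub c p) (sub c q))) := hm _ _
    -- easy direction: f(m) ≤ f(c−p) ⋏ f(c−q)
    have dir1 : sub (f (sub (sub c p) (sub (sub c p) (sub c q))))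
        (sub (f (sub c p)) (sub (f (sub c p)) (f (sub c q)))) = zero :=
      GLB _ _ _ (fmono f hm _ _ hmP) (fmono f hm _ _ hmQ)
    -- (c−q) ⋏ ((c−p)−(c−q)) = 0
    have hQB : sub (sub c q) (sub (sub c q) (sub (sub c p) (sub c q))) = zero :=
      DISJ2 (sub c q) (sub c p)
    -- hence (c−q) ≤ c − ((c−p)−(c−q))
    have hQcB : sub (sub c q) (sub c (sub (sub c p) (sub c q))) = zero :=
      SEP _ _ _ hQc hBc hQB
    have hfQle : sub (f (sub c q)) (f (sub c (sub (sub c p) (sub c q)))) = zero :=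
      fmono f hm _ _ hQcB
    have hfcB : sub (f c) (f (sub (sub c p) (sub c q)))
        = f (sub c (sub (sub c p) (sub c q))) := fdiff f hm _ c hBc
    -- f(c−q) ⋏ f((c−p)−(c−q)) = 0
    have t1 : sub (sub (f (sub c q)) (sub (f (sub c q)) (f (sub (sub c p) (sub c q)))))
        (f (sub (sub c p) (sub c q))) = zero := by
      rw [sub2 (f (sub c q)) (f (sub (sub c p) (sub c q)))]
      exact M1 _ _
    have t2 : sub (sub (f (sub c q)) (sub (f (sub c q)) (f (sub (sub c p) (sub c q)))))
        (f (sub c q)) = zero := M1 _ _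
    have t3 : sub (sub (f (sub c q)) (sub (f (sub c q)) (f (sub (sub c p) (sub c q)))))
        (sub (f c) (f (sub (sub c p) (sub c q)))) = zero := by
      rw [hfcB]
      exact TRANS _ _ _ t2 hfQle
    have t4 : sub (f (sub (sub c p) (sub c q)))
        (sub (f (sub (sub c p) (sub c q)))
          (sub (f c) (f (sub (sub c p) (sub c q))))) = zero :=
      DISJ2 (f (sub (sub c p) (sub c q))) (f c)
    have t5 := GLB _ _ _ t1 t3
    rw [t4, A1] at t5
    -- t5 : f(c−q) ⋏ f((c−p)−(c−q)) = 0
    -- now let z := f(c−p) ⋏ f(c−q); show z ⋏ f((c−p)−(c−q)) = 0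
    have z1 : sub (sub (f (sub c p)) (sub (f (sub c p)) (f (sub c q)))) (f (sub c q)) = zero := by
      rw [sub2 (f (sub c p)) (f (sub c q))]
      exact M1 _ _
    have z2 : sub (sub (f (sub c p)) (sub (f (sub c p)) (f (sub c q)))) (f (sub c p)) = zero :=
      M1 _ _
    have z3 : sub (sub (sub (f (sub c p)) (sub (f (sub c p)) (f (sub c q))))
        (sub (sub (f (sub c p)) (sub (f (sub c p)) (f (sub c q))))
          (f (sub (sub c p) (sub c q)))))
        (f (sub (sub c p) (sub c q))) = zero := by
      rw [sub2 (sub (f (sub c p)) (sub (f (sub c p)) (f (sub c q))))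
        (f (sub (sub c p) (sub c q)))]
      exact M1 _ _
    have z4 : sub (sub (sub (f (sub c p)) (sub (f (sub c p)) (f (sub c q))))
        (sub (sub (f (sub c p)) (sub (f (sub c p)) (f (sub c q))))
          (f (sub (sub c p) (sub c q)))))
        (f (sub c q)) = zero := TRANS _ _ _ (M1 _ _) z1
    have z5 := GLB _ (f (sub c q)) (f (sub (sub c p) (sub c q))) z4 z3
    rw [t5, A1] at z5
    -- z5 : z ⋏ f((c−p)−(c−q)) = 0
    have dir2 : sub (sub (f (sub c p)) (sub (f (sub c p)) (f (sub c q))))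
        (f (sub (sub c p) (sub (sub c p) (sub c q)))) = zero := by
      rw [hFm]
      exact DISJLE _ _ _ z2 z5
    have core : f (sub (sub c p) (sub (sub c p) (sub c q)))
        = sub (f (sub c p)) (sub (f (sub c p)) (f (sub c q))) :=
      ANTISYM _ _ dir1 dir2
    have ep : sub (f c) (f p) = f (sub c p) := fdiff f hm p c hp
    have eq' : sub (f c) (f q) = f (sub c q) := fdiff f hm q c hq
    have em : sub (f c) (f (sub (sub c p) (sub (sub c p) (sub c q))))
        = f (sub c (sub (sub c p) (sub (sub c p) (sub c q)))) := fdiff f hm _ c hmc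
    show f (sub c (sub (sub c p) (sub (sub c p) (sub c q))))
        = sub (f c) (sub (sub (f c) (f p)) (sub (sub (f c) (f p)) (sub (f c) (f q))))
    rw [ep, eq', ← core, em]
  -- ## Monotonicity and difference law for all polynomials
  have lemA : ∀ t : G → G, MengerPoly op t → ∀ d e : G, sub d e = zero →
      sub (t d) (t e) = zero ∧ sub (t e) (t d) = t (sub e d) := by
    intro t ht
    induction ht with
    | id => intro d e h; exact ⟨h, rfl⟩
    | comp u w i s _ IH =>
      intro d e h
      have hm : ∀ p q : G, op u (Function.update w i (sub p (sub p q)))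
          = sub (op u (Function.update w i p)) (op u (Function.update w i (sub p q))) :=
        meetax u w i
      obtain ⟨ih1, ih2⟩ := IH d e h
      constructor
      · exact fmono (fun v => op u (Function.update w i v)) hm _ _ ih1
      · have hd := fdiff (fun v => op u (Function.update w i v)) hm (s d) (s e) ih1
        rw [ih2] at hd
        exact hd
  -- ## Join preservation for all polynomials
  have lemB : ∀ t : G → G, MengerPoly op t → ∀ p q c : G, sub p c = zero → sub q c = zero →
      t (svee sub c p q) = svee sub (t c) (t p) (t q) := by
    intro t ht
    induction ht with
    | id => intro p q c hp hq; rfl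
    | comp u w i s hs IH =>
      intro p q c hp hq
      have hm : ∀ p' q' : G, op u (Function.update w i (sub p' (sub p' q')))
          = sub (op u (Function.update w i p')) (op u (Function.update w i (sub p' q'))) :=
        meetax u w i
      have hsp : sub (s p) (s c) = zero := (lemA s hs p c hp).1
      have hsq : sub (s q) (s c) = zero := (lemA s hs q c hq).1
      have e1 : s (svee sub c p q) = svee sub (s c) (s p) (s q) := IH p q c hp hq
      show op u (Function.update w i (s (svee sub c p q)))
          = svee sub (op u (Function.update w i (s c))) (op u (Function.update w i (s p)))
              (op u (Function.update w i (s q)))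
      rw [e1]
      exact onestep (fun v => op u (Function.update w i v)) hm (s p) (s q) (s c) hsp hsq
  intro t ht
  exact ⟨(lemA t ht x a hxa).1, (lemA t ht y a hya).1, lemB t ht x y a hxa hya⟩
end

section
/- In any subtraction Menger algebra of rank n, for all x,y ∈ G and all polynomials t₁,t₂ ∈ Tₙ(G): t₁(x⋏y) ⋏ t₂(x−y) = 0. -/
/-- In any subtraction Menger algebra of rank `n`, for all `x, y` and all
polynomials `t₁, t₂`: `t₁(x⋏y) ⋏ t₂(x−y) = 0`. -/
theorem subtraction_menger_meet_poly_disjoint {G : Type} {n : ℕ}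
    (op : G → (Fin n → G) → G) (sub : G → G → G) (zero : G)
    (superassoc : ∀ (x : G) (y z : Fin n → G),
      op (op x y) z = op x (fun i => op (y i) z))
    (sub1 : ∀ x y : G, sub x (sub y x) = x)
    (sub2 : ∀ x y : G, sub x (sub x y) = sub y (sub y x))
    (sub3 : ∀ x y z : G, sub (sub x y) z = sub (sub x z) y)
    (sub4 : sub zero zero = zero)
    (distrib : ∀ (x y : G) (z : Fin n → G),
      op (sub x y) z = sub (op x z) (op y z))
    (meetax : ∀ (u : G) (w : Fin n → G) (i : Fin n) (x y : G),
      op u (Function.update w i (sub x (sub x y)))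
        = sub (op u (Function.update w i x)) (op u (Function.update w i (sub x y))))
    (steady : ∀ (x y z : G) (t₁ t₂ : G → G), MengerPoly op t₁ → MengerPoly op t₂ →
      sub x y = zero → sub z (t₁ x) = zero → sub z (t₂ y) = zero →
      sub z (t₂ x) = zero)
    :
    ∀ (t₁ t₂ : G → G), MengerPoly op t₁ → MengerPoly op t₂ → ∀ x y : G,
      smeet sub (t₁ (smeet sub x y)) (t₂ (sub x y)) = zero := by
  -- ### Basic subtraction-algebra facts ###
  have e1 : ∀ x, sub x (sub x x) = x := fun x => sub1 x x
  have e3 : ∀ x, sub (sub x x) x = sub x x := by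
    intro x; have h := sub1 (sub x x) x; rwa [e1] at h
  have e5 : ∀ x, sub (sub x x) (sub x x) = sub x x := by
    intro x
    have h := sub2 x (sub x x)
    rw [e1, e3] at h
    exact h.symm
  -- `(a−a) − b = a−a` for all `a b`
  have zconst : ∀ a b, sub (sub a a) b = sub a a := by
    intro a b
    have h1 : sub b (sub (sub a a) b) = b := sub1 b (sub a a)
    have h2 : sub (sub (sub a a) b) b = sub (sub a a) b := by
      have h := sub1 (sub (sub a a) b) b
      rwa [h1] at h
    have h3 : sub (sub (sub a a) b) (sub a a) = sub (sub a a) b := by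
      rw [sub3, e5]
    have h4 : sub (sub a a) (sub (sub a a) b) = sub a a := by
      have h := sub1 (sub a a) (sub (sub a a) b)
      rwa [h3] at h
    have h5 : sub (sub (sub a a) b) (sub (sub a a) b) = sub a a := by
      have h := sub2 (sub (sub a a) b) (sub a a)
      rw [h3, h4, e5] at h
      exact h
    have h6 : sub (sub (sub (sub a a) b) b) (sub (sub a a) b)
        = sub (sub (sub (sub a a) b) (sub (sub a a) b)) b :=
      sub3 (sub (sub a a) b) b (sub (sub a a) b)
    rw [h2, h5] at h6
    exact h6.symm
  -- `x − x = 0`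
  have zsub : ∀ x, sub x x = zero := by
    intro x
    have z0' : ∀ b, sub zero b = zero := by
      intro b
      have h := zconst zero b
      rwa [sub4] at h
    have h := sub2 (sub x x) zero
    rw [zconst x zero, e5, z0'] at h
    exact h
  have x0 : ∀ x, sub x zero = x := by
    intro x; have h := sub1 x x; rwa [zsub] at h
  have z0 : ∀ x, sub zero x = zero := by
    intro x; have h := zconst zero x; rwa [sub4] at h
  have lsub : ∀ x y, sub (sub x y) x = zero := by
    intro x y; rw [sub3, zsub, z0]
  have letrans : ∀ p q r, sub p q = zero → sub q r = zero → sub p r = zero := by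
    intro p q r h1 h2
    have hp : p = sub q (sub q p) := by
      have h := sub2 p q; rw [h1, x0] at h; exact h
    rw [hp, sub3, h2, z0]
  have anti2 : ∀ z x y, sub z x = zero → sub (sub y x) (sub y z) = zero := by
    intro z x y h
    calc sub (sub y x) (sub y z) = sub (sub y (sub y z)) x := sub3 y x (sub y z)
      _ = sub (sub z (sub z y)) x := by rw [sub2 y z]
      _ = sub (sub z x) (sub z y) := sub3 z (sub z y) x
      _ = sub zero (sub z y) := by rw [h]
      _ = zero := z0 _
  have meet_le_l : ∀ x y, sub (sub x (sub x y)) x = zero := fun x y => lsub x (sub x y)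
  have meet_le_r : ∀ x y, sub (sub x (sub x y)) y = zero := by
    intro x y; rw [sub2 x y]; exact lsub y (sub y x)
  have meet_of_le : ∀ p q, sub q p = zero → sub p (sub p q) = q := by
    intro p q h
    rw [sub2, h, x0]
  have glb : ∀ z x y, sub z x = zero → sub z y = zero →
      sub z (sub x (sub x y)) = zero := by
    intro z x y hx hy
    have hz : z = sub y (sub y z) := by
      have h := sub2 z y; rw [hy, x0] at h; exact h
    have h1 : sub (sub y x) (sub y z) = zero := anti2 z x y hx
    have h2 : sub (sub y (sub y z)) (sub y (sub y x)) = zero :=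
      anti2 (sub y x) (sub y z) y h1
    rw [← hz] at h2
    rw [sub2 x y]
    exact h2
  -- ### Polynomials: t(x⋏y) = t(x) − t(x−y) ###
  have polyA : ∀ t, MengerPoly op t → ∀ x y,
      t (sub x (sub x y)) = sub (t x) (t (sub x y)) := by
    intro t ht
    induction ht with
    | id => intro x y; rfl
    | comp a b i s hs ih =>
      intro x y
      have hle : sub (sub x y) x = zero := lsub x y
      have hmq : sub x (sub x (sub x y)) = sub x y := meet_of_le x (sub x y) hle
      have hmono : sub (s (sub x y)) (s x) = zero := by
        have h := ih x (sub x y)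
        rw [hmq] at h
        rw [h]
        exact lsub _ _
      have key : sub (s x) (sub (s x) (s (sub x y))) = s (sub x y) :=
        meet_of_le (s x) (s (sub x y)) hmono
      have hmx := meetax a b i (s x) (sub (s x) (s (sub x y)))
      rw [key] at hmx
      show op a (Function.update b i (s (sub x (sub x y))))
          = sub (op a (Function.update b i (s x))) (op a (Function.update b i (s (sub x y))))
      rw [ih x y]
      exact hmx
  have polyMono : ∀ t, MengerPoly op t → ∀ p q, sub q p = zero →
      sub (t q) (t p) = zero := by
    intro t ht p q h
    have h1 : sub p (sub p q) = q := meet_of_le p q h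
    have h2 := polyA t ht p q
    rw [h1] at h2
    rw [h2]
    exact lsub _ _
  -- ### Main proof ###
  intro t₁ t₂ h₁ h₂ x y
  simp only [smeet]
  have hz1 : sub (sub (t₁ (sub x (sub x y))) (sub (t₁ (sub x (sub x y))) (t₂ (sub x y))))
      (t₁ (sub x (sub x y))) = zero := meet_le_l _ _
  have hz2 : sub (sub (t₁ (sub x (sub x y))) (sub (t₁ (sub x (sub x y))) (t₂ (sub x y))))
      (t₂ (sub x y)) = zero := meet_le_r _ _
  have hax : sub (sub x (sub x y)) x = zero := meet_le_l x y
  have hbx : sub (sub x y) x = zero := lsub x y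
  have hz3 : sub (sub (t₁ (sub x (sub x y))) (sub (t₁ (sub x (sub x y))) (t₂ (sub x y))))
      (t₂ x) = zero :=
    letrans _ _ _ hz2 (polyMono t₂ h₂ x (sub x y) hbx)
  have hz4 := steady (sub x (sub x y)) x _ t₁ t₂ h₁ h₂ hax hz1 hz3
  have hA := polyA t₂ h₂ x y
  have hdisj : sub (t₂ (sub x (sub x y)))
      (sub (t₂ (sub x (sub x y))) (t₂ (sub x y))) = zero := by
    rw [hA, sub2, sub1, zsub]
  have hglb := glb _ (t₂ (sub x (sub x y))) (t₂ (sub x y)) hz4 hz2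
  rw [hdisj, x0] at hglb
  exact hglb
end

section
/- In any subtraction Menger algebra of rank n, for all x,y,z,g ∈ G and all polynomials t₁,t₂ ∈ Tₙ(G): (i) t₁(x⋏y)⋏t₂(y) = t₁(x⋏y)⋏t₂(x⋏y); (ii) t₁(x⋏y⋏z)⋏t₂(y) ≤ t₁(x⋏y)⋏t₂(y⋏z); (iii) if g ≤ t₁(x⋏y) and g ≤ t₂(y⋏z), then g ≤ t₂(x⋏y⋏z). -/
section SA

variable {G : Type} (sub : G → G → G) (zero : G)
variable (sub1 : ∀ x y : G, sub x (sub y x) = x)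
variable (sub2 : ∀ x y : G, sub x (sub x y) = sub y (sub y x))
variable (sub3 : ∀ x y z : G, sub (sub x y) z = sub (sub x z) y)
variable (sub4 : sub zero zero = zero)

include sub1 sub2 sub3 sub4

theorem sa_self : ∀ x : G, sub x x = zero := by
  have a : ∀ x : G, sub x (sub x x) = x := fun x => sub1 x x
  have c : ∀ x : G, sub (sub x x) (sub x x) = sub x x := by
    intro x; rw [sub3, a]
  have d : ∀ p q : G, sub (sub (sub p p) (sub q q)) (sub p p) = sub (sub p p) (sub q q) := by
    intro p q; rw [sub3, c]
  have e : ∀ p q : G, sub (sub p p) (sub (sub p p) (sub q q)) = sub p p := by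
    intro p q
    have h := sub1 (sub p p) (sub (sub p p) (sub q q))
    rwa [d p q] at h
  have key : ∀ x y : G, sub x x = sub y y := by
    intro x y
    have f := sub2 (sub x x) (sub y y)
    rwa [e x y, e y x] at f
  intro x
  rw [key x zero]; exact sub4

theorem sa_sub_zero : ∀ x : G, sub x zero = x := by
  intro x
  have h := sub1 x x
  rwa [sa_self sub zero sub1 sub2 sub3 sub4 x] at h

theorem sa_zero_sub : ∀ x : G, sub zero x = zero := by
  intro x
  have h := sub1 (sub x x) x
  rw [sub1 x x] at h
  rwa [sa_self sub zero sub1 sub2 sub3 sub4 x] at h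

theorem sa_sub_le : ∀ x y : G, sub (sub x y) x = zero := by
  intro x y
  rw [sub3 x y x, sa_self sub zero sub1 sub2 sub3 sub4 x,
    sa_zero_sub sub zero sub1 sub2 sub3 sub4 y]

theorem sa_sub_sub : ∀ x y : G, sub (sub x y) y = sub x y := by
  intro x y
  have h := sub1 (sub x y) y
  rwa [sub1 y x] at h

theorem sa_mono {a b : G} (h : sub a b = zero) : ∀ z : G, sub (sub a z) (sub b z) = zero := by
  have ha : sub b (sub b a) = a := by
    have h2 := sub2 b a
    rwa [h, sa_sub_zero sub zero sub1 sub2 sub3 sub4 a] at h2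
  intro z
  have key : sub (sub (sub b (sub b a)) z) (sub b z) = zero := by
    rw [sub3 b (sub b a) z, sub3 (sub b z) (sub b a) (sub b z),
      sa_self sub zero sub1 sub2 sub3 sub4 (sub b z),
      sa_zero_sub sub zero sub1 sub2 sub3 sub4 (sub b a)]
  rwa [ha] at key

theorem sa_trans {a b c : G} (h1 : sub a b = zero) (h2 : sub b c = zero) :
    sub a c = zero := by
  have h := sa_mono sub zero sub1 sub2 sub3 sub4 h1 c
  rwa [h2, sa_sub_zero sub zero sub1 sub2 sub3 sub4 (sub a c)] at h

theorem sa_anti {a b : G} (h : sub a b = zero) : ∀ z : G, sub (sub z b) (sub z a) = zero := by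
  intro z
  rw [sub3 z b (sub z a), sub2 z a, sub3 a (sub a z) b, h,
    sa_zero_sub sub zero sub1 sub2 sub3 sub4 (sub a z)]

theorem sa_antisym {a b : G} (h1 : sub a b = zero) (h2 : sub b a = zero) : a = b := by
  have h := sub2 a b
  rwa [h1, h2, sa_sub_zero sub zero sub1 sub2 sub3 sub4 a,
    sa_sub_zero sub zero sub1 sub2 sub3 sub4 b] at h

theorem sa_meet_right : ∀ x y : G, sub (sub x (sub x y)) y = zero := by
  intro x y
  rw [sub2 x y]
  exact sa_sub_le sub zero sub1 sub2 sub3 sub4 y (sub y x)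

theorem sa_le_meet {z x y : G} (h1 : sub z x = zero) (h2 : sub z y = zero) :
    sub z (sub x (sub x y)) = zero := by
  have hz : sub x (sub x z) = z := by
    have h := sub2 x z
    rwa [h1, sa_sub_zero sub zero sub1 sub2 sub3 sub4 z] at h
  have a1 : sub (sub x y) (sub x z) = zero := sa_anti sub zero sub1 sub2 sub3 sub4 h2 x
  have a2 : sub (sub x (sub x z)) (sub x (sub x y)) = zero :=
    sa_anti sub zero sub1 sub2 sub3 sub4 a1 x
  rwa [hz] at a2

theorem sa_id1 : ∀ p q : G, sub p (sub p (sub p q)) = sub p q := by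
  intro p q
  have h := sub2 p (sub p q)
  rwa [sa_sub_le sub zero sub1 sub2 sub3 sub4 p q,
    sa_sub_zero sub zero sub1 sub2 sub3 sub4 (sub p q)] at h

theorem sa_rem {g m : G} (hm : sub g m = zero) :
    ∀ r : G, sub (sub g (sub m r)) r = zero := by
  have hg : sub m (sub m g) = g := by
    have h2 := sub2 m g
    rwa [hm, sa_sub_zero sub zero sub1 sub2 sub3 sub4 g] at h2
  intro r
  have e1 : sub g (sub m r) = sub (sub m (sub m r)) (sub m g) := by
    conv_lhs => rw [← hg]
    rw [sub3]
  have e2 : sub (sub (sub m (sub m r)) (sub m g)) (sub m (sub m r)) = zero :=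
    sa_sub_le sub zero sub1 sub2 sub3 sub4 (sub m (sub m r)) (sub m g)
  have e3 : sub (sub m (sub m r)) r = zero := sa_meet_right sub zero sub1 sub2 sub3 sub4 m r
  rw [e1]
  exact sa_trans sub zero sub1 sub2 sub3 sub4 e2 e3

theorem sa_disj : ∀ p q : G, sub (sub p q) (sub (sub p q) q) = zero := by
  intro p q
  rw [sa_sub_sub sub zero sub1 sub2 sub3 sub4 p q]
  exact sa_self sub zero sub1 sub2 sub3 sub4 (sub p q)

end SA

section Menger

variable {G : Type} {n : ℕ} (op : G → (Fin n → G) → G) (sub : G → G → G) (zero : G)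
variable (sub1 : ∀ x y : G, sub x (sub y x) = x)
variable (sub2 : ∀ x y : G, sub x (sub x y) = sub y (sub y x))
variable (sub3 : ∀ x y z : G, sub (sub x y) z = sub (sub x z) y)
variable (sub4 : sub zero zero = zero)
variable (meetax : ∀ (u : G) (w : Fin n → G) (i : Fin n) (x y : G),
      op u (Function.update w i (sub x (sub x y)))
        = sub (op u (Function.update w i x)) (op u (Function.update w i (sub x y))))

include sub1 sub2 sub3 sub4 meetax

theorem m_lemmaM {t : G → G} (ht : MengerPoly op t) :
    ∀ p q : G, t (sub p (sub p q)) = sub (t p) (t (sub p q)) := by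
  induction ht with
  | id => intro p q; rfl
  | comp a b i s hs IH =>
    intro p q
    show op a (Function.update b i (s (sub p (sub p q))))
        = sub (op a (Function.update b i (s p))) (op a (Function.update b i (s (sub p q))))
    have hM2 := IH p (sub p q)
    rw [sa_id1 sub zero sub1 sub2 sub3 sub4 p q] at hM2
    have hle : sub (s (sub p q)) (s p) = zero := by
      rw [hM2]
      exact sa_sub_le sub zero sub1 sub2 sub3 sub4 (s p) (s (sub p (sub p q)))
    have e4 : sub (s p) (sub (s p) (s (sub p q))) = s (sub p q) := by
      have h := sub2 (s p) (s (sub p q))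
      rwa [hle, sa_sub_zero sub zero sub1 sub2 sub3 sub4 (s (sub p q))] at h
    have hm := meetax a b i (s p) (sub (s p) (s (sub p q)))
    rw [e4] at hm
    rw [IH p q]
    exact hm

theorem m_mono {t : G → G} (ht : MengerPoly op t) {x y : G} (h : sub x y = zero) :
    sub (t x) (t y) = zero := by
  have e : sub y (sub y x) = x := by
    have h2 := sub2 y x
    rwa [h, sa_sub_zero sub zero sub1 sub2 sub3 sub4 x] at h2
  have hM := m_lemmaM op sub zero sub1 sub2 sub3 sub4 meetax ht y x
  rw [e] at hM
  rw [hM]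
  exact sa_sub_le sub zero sub1 sub2 sub3 sub4 (t y) (t (sub y x))

theorem m_core (u : G) (w : Fin n → G) (i : Fin n) (y A B g : G)
    (hAy : sub A y = zero) (hBy : sub B y = zero)
    (hgA : sub g (op u (Function.update w i A)) = zero)
    (hgB : sub g (op u (Function.update w i B)) = zero) :
    sub g (op u (Function.update w i (sub A (sub A B)))) = zero := by
  have hP : MengerPoly op (fun v => op u (Function.update w i v)) :=
    MengerPoly.comp u w i (fun v => v) MengerPoly.id
  have hPm : ∀ p q : G, sub p q = zero →
      sub (op u (Function.update w i p)) (op u (Function.update w i q)) = zero := by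
    intro p q h
    exact m_mono op sub zero sub1 sub2 sub3 sub4 meetax hP h
  rw [meetax u w i A B]
  have hd1 : sub (sub g (sub (op u (Function.update w i A)) (op u (Function.update w i (sub A B)))))
      (op u (Function.update w i (sub A B))) = zero :=
    sa_rem sub zero sub1 sub2 sub3 sub4 hgA (op u (Function.update w i (sub A B)))
  have hABy : sub (sub A B) (sub y B) = zero := sa_mono sub zero sub1 sub2 sub3 sub4 hAy B
  have hd2 : sub (sub g (sub (op u (Function.update w i A)) (op u (Function.update w i (sub A B)))))
      (op u (Function.update w i (sub y B))) = zero :=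
    sa_trans sub zero sub1 sub2 sub3 sub4 hd1 (hPm _ _ hABy)
  have hdg : sub (sub g (sub (op u (Function.update w i A)) (op u (Function.update w i (sub A B))))) g = zero :=
    sa_sub_le sub zero sub1 sub2 sub3 sub4 g (sub (op u (Function.update w i A)) (op u (Function.update w i (sub A B))))
  have hdB : sub (sub g (sub (op u (Function.update w i A)) (op u (Function.update w i (sub A B)))))
      (op u (Function.update w i B)) = zero :=
    sa_trans sub zero sub1 sub2 sub3 sub4 hdg hgB
  have eyB : sub y (sub y B) = B := by
    have h2 := sub2 y B
    rwa [hBy, sa_sub_zero sub zero sub1 sub2 sub3 sub4 B] at h2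
  have key0 : op u (Function.update w i B)
      = sub (op u (Function.update w i y)) (op u (Function.update w i (sub y B))) := by
    have hmx := meetax u w i y B
    rwa [eyB] at hmx
  have hdisj : sub (op u (Function.update w i B))
      (sub (op u (Function.update w i B)) (op u (Function.update w i (sub y B)))) = zero := by
    rw [key0]
    exact sa_disj sub zero sub1 sub2 sub3 sub4 (op u (Function.update w i y))
      (op u (Function.update w i (sub y B)))
  have hmeet := sa_le_meet sub zero sub1 sub2 sub3 sub4 hdB hd2
  rw [hdisj] at hmeet
  rwa [sa_sub_zero sub zero sub1 sub2 sub3 sub4] at hmeet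

variable (steady : ∀ (x y z : G) (t₁ t₂ : G → G), MengerPoly op t₁ → MengerPoly op t₂ →
      sub x y = zero → sub z (t₁ x) = zero → sub z (t₂ y) = zero →
      sub z (t₂ x) = zero)

include steady

theorem m_keyS {t₂ : G → G} (ht₂ : MengerPoly op t₂) :
    ∀ (t₁ : G → G), MengerPoly op t₁ → ∀ y A B g : G,
      sub A y = zero → sub B y = zero → sub g (t₁ A) = zero → sub g (t₂ B) = zero →
      sub g (t₂ (sub A (sub A B))) = zero := by
  induction ht₂ with
  | id =>
    intro t₁ ht₁ y A B g hAy hBy hgA hgB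
    have hgy : sub g y = zero := sa_trans sub zero sub1 sub2 sub3 sub4 hgB hBy
    have hgA' : sub g A = zero :=
      steady A y g t₁ (fun v => v) ht₁ MengerPoly.id hAy hgA hgy
    exact sa_le_meet sub zero sub1 sub2 sub3 sub4 hgA' hgB
  | comp a b i s hs IH =>
    intro t₁ ht₁ y A B g hAy hBy hgA hgB
    have ht₂' : MengerPoly op (fun v => op a (Function.update b i (s v))) :=
      MengerPoly.comp a b i s hs
    have hgB' : sub g (op a (Function.update b i (s B))) = zero := hgB
    have hty : sub (op a (Function.update b i (s B))) (op a (Function.update b i (s y))) = zero :=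
      m_mono op sub zero sub1 sub2 sub3 sub4 meetax ht₂' hBy
    have hgy : sub g (op a (Function.update b i (s y))) = zero :=
      sa_trans sub zero sub1 sub2 sub3 sub4 hgB' hty
    have hgA2 : sub g (op a (Function.update b i (s A))) = zero :=
      steady A y g t₁ (fun v => op a (Function.update b i (s v))) ht₁ ht₂' hAy hgA hgy
    have hsA : sub (s A) (s y) = zero := m_mono op sub zero sub1 sub2 sub3 sub4 meetax hs hAy
    have hsB : sub (s B) (s y) = zero := m_mono op sub zero sub1 sub2 sub3 sub4 meetax hs hBy
    have hcore := m_core op sub zero sub1 sub2 sub3 sub4 meetax a b i (s y) (s A) (s B) g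
      hsA hsB hgA2 hgB'
    have hIH : sub (sub (s A) (sub (s A) (s B))) (s (sub A (sub A B))) = zero := by
      apply IH s hs y A B (sub (s A) (sub (s A) (s B))) hAy hBy
      · exact sa_sub_le sub zero sub1 sub2 sub3 sub4 (s A) (sub (s A) (s B))
      · exact sa_meet_right sub zero sub1 sub2 sub3 sub4 (s A) (s B)
    have hP : MengerPoly op (fun v => op a (Function.update b i v)) :=
      MengerPoly.comp a b i (fun v => v) MengerPoly.id
    have hPm : sub (op a (Function.update b i (sub (s A) (sub (s A) (s B)))))
        (op a (Function.update b i (s (sub A (sub A B))))) = zero :=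
      m_mono op sub zero sub1 sub2 sub3 sub4 meetax hP hIH
    exact sa_trans sub zero sub1 sub2 sub3 sub4 hcore hPm

end Menger

/-- In any subtraction Menger algebra of rank `n`, for all `x, y, z, g` and all
polynomials `t₁, t₂`:
(i) `t₁(x⋏y)⋏t₂(y) = t₁(x⋏y)⋏t₂(x⋏y)`;
(ii) `t₁(x⋏y⋏z)⋏t₂(y) ≤ t₁(x⋏y)⋏t₂(y⋏z)`;
(iii) `g ≤ t₁(x⋏y)` and `g ≤ t₂(y⋏z)` imply `g ≤ t₂(x⋏y⋏z)`. -/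
theorem subtraction_menger_meet_poly_props {G : Type} {n : ℕ}
    (op : G → (Fin n → G) → G) (sub : G → G → G) (zero : G)
    (superassoc : ∀ (x : G) (y z : Fin n → G),
      op (op x y) z = op x (fun i => op (y i) z))
    (sub1 : ∀ x y : G, sub x (sub y x) = x)
    (sub2 : ∀ x y : G, sub x (sub x y) = sub y (sub y x))
    (sub3 : ∀ x y z : G, sub (sub x y) z = sub (sub x z) y)
    (sub4 : sub zero zero = zero)
    (distrib : ∀ (x y : G) (z : Fin n → G),
      op (sub x y) z = sub (op x z) (op y z))
    (meetax : ∀ (u : G) (w : Fin n → G) (i : Fin n) (x y : G),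
      op u (Function.update w i (sub x (sub x y)))
        = sub (op u (Function.update w i x)) (op u (Function.update w i (sub x y))))
    (steady : ∀ (x y z : G) (t₁ t₂ : G → G), MengerPoly op t₁ → MengerPoly op t₂ →
      sub x y = zero → sub z (t₁ x) = zero → sub z (t₂ y) = zero →
      sub z (t₂ x) = zero)
    :
    ∀ (x y z g : G) (t₁ t₂ : G → G), MengerPoly op t₁ → MengerPoly op t₂ →
      (smeet sub (t₁ (smeet sub x y)) (t₂ y)
        = smeet sub (t₁ (smeet sub x y)) (t₂ (smeet sub x y))) ∧
      (sub (smeet sub (t₁ (smeet sub (smeet sub x y) z)) (t₂ y))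
        (smeet sub (t₁ (smeet sub x y)) (t₂ (smeet sub y z))) = zero) ∧
      (sub g (t₁ (smeet sub x y)) = zero → sub g (t₂ (smeet sub y z)) = zero →
        sub g (t₂ (smeet sub (smeet sub x y) z)) = zero) := by
  intro x y z g t₁ t₂ ht₁ ht₂
  simp only [smeet]
  have hAy : sub (sub x (sub x y)) y = zero := sa_meet_right sub zero sub1 sub2 sub3 sub4 x y
  have hBy : sub (sub y (sub y z)) y = zero :=
    sa_sub_le sub zero sub1 sub2 sub3 sub4 y (sub y z)
  have hBz : sub (sub y (sub y z)) z = zero := sa_meet_right sub zero sub1 sub2 sub3 sub4 y z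
  refine ⟨?_, ?_, ?_⟩
  · -- part (i)
    apply sa_antisym sub zero sub1 sub2 sub3 sub4
    · have hL1 : sub (sub (t₁ (sub x (sub x y))) (sub (t₁ (sub x (sub x y))) (t₂ y)))
          (t₁ (sub x (sub x y))) = zero :=
        sa_sub_le sub zero sub1 sub2 sub3 sub4 _ _
      have hL2 : sub (sub (t₁ (sub x (sub x y))) (sub (t₁ (sub x (sub x y))) (t₂ y)))
          (t₂ y) = zero :=
        sa_meet_right sub zero sub1 sub2 sub3 sub4 _ _
      have hL3 := steady (sub x (sub x y)) y _ t₁ t₂ ht₁ ht₂ hAy hL1 hL2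
      exact sa_le_meet sub zero sub1 sub2 sub3 sub4 hL1 hL3
    · have hR1 : sub (sub (t₁ (sub x (sub x y))) (sub (t₁ (sub x (sub x y))) (t₂ (sub x (sub x y)))))
          (t₁ (sub x (sub x y))) = zero :=
        sa_sub_le sub zero sub1 sub2 sub3 sub4 _ _
      have hR2 : sub (sub (t₁ (sub x (sub x y))) (sub (t₁ (sub x (sub x y))) (t₂ (sub x (sub x y)))))
          (t₂ (sub x (sub x y))) = zero :=
        sa_meet_right sub zero sub1 sub2 sub3 sub4 _ _
      have hmono : sub (t₂ (sub x (sub x y))) (t₂ y) = zero :=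
        m_mono op sub zero sub1 sub2 sub3 sub4 meetax ht₂ hAy
      have hR3 := sa_trans sub zero sub1 sub2 sub3 sub4 hR2 hmono
      exact sa_le_meet sub zero sub1 sub2 sub3 sub4 hR1 hR3
  · -- part (ii)
    have hCA : sub (sub (sub x (sub x y)) (sub (sub x (sub x y)) z)) (sub x (sub x y)) = zero :=
      sa_sub_le sub zero sub1 sub2 sub3 sub4 _ _
    have hCz : sub (sub (sub x (sub x y)) (sub (sub x (sub x y)) z)) z = zero :=
      sa_meet_right sub zero sub1 sub2 sub3 sub4 _ _
    have hCy : sub (sub (sub x (sub x y)) (sub (sub x (sub x y)) z)) y = zero :=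
      sa_trans sub zero sub1 sub2 sub3 sub4 hCA hAy
    have hCB : sub (sub (sub x (sub x y)) (sub (sub x (sub x y)) z)) (sub y (sub y z)) = zero :=
      sa_le_meet sub zero sub1 sub2 sub3 sub4 hCy hCz
    have h1 : sub (sub (t₁ (sub (sub x (sub x y)) (sub (sub x (sub x y)) z)))
          (sub (t₁ (sub (sub x (sub x y)) (sub (sub x (sub x y)) z))) (t₂ y)))
        (t₁ (sub (sub x (sub x y)) (sub (sub x (sub x y)) z))) = zero :=
      sa_sub_le sub zero sub1 sub2 sub3 sub4 _ _
    have h2 : sub (sub (t₁ (sub (sub x (sub x y)) (sub (sub x (sub x y)) z)))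
          (sub (t₁ (sub (sub x (sub x y)) (sub (sub x (sub x y)) z))) (t₂ y)))
        (t₂ y) = zero :=
      sa_meet_right sub zero sub1 sub2 sub3 sub4 _ _
    have h3 : sub (t₁ (sub (sub x (sub x y)) (sub (sub x (sub x y)) z))) (t₁ (sub x (sub x y))) = zero :=
      m_mono op sub zero sub1 sub2 sub3 sub4 meetax ht₁ hCA
    have h4 := sa_trans sub zero sub1 sub2 sub3 sub4 h1 h3
    have h5 := steady (sub (sub x (sub x y)) (sub (sub x (sub x y)) z)) y _ t₁ t₂ ht₁ ht₂ hCy h1 h2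
    have h6 : sub (t₂ (sub (sub x (sub x y)) (sub (sub x (sub x y)) z))) (t₂ (sub y (sub y z))) = zero :=
      m_mono op sub zero sub1 sub2 sub3 sub4 meetax ht₂ hCB
    have h7 := sa_trans sub zero sub1 sub2 sub3 sub4 h5 h6
    exact sa_le_meet sub zero sub1 sub2 sub3 sub4 h4 h7
  · -- part (iii)
    intro hg1 hg2
    have hk := m_keyS op sub zero sub1 sub2 sub3 sub4 meetax steady ht₂ t₁ ht₁ y
      (sub x (sub x y)) (sub y (sub y z)) g hAy hBy hg1 hg2
    have heq : sub (sub x (sub x y)) (sub (sub x (sub x y)) (sub y (sub y z)))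
        = sub (sub x (sub x y)) (sub (sub x (sub x y)) z) := by
      apply sa_antisym sub zero sub1 sub2 sub3 sub4
      · have m1 : sub (sub (sub x (sub x y)) (sub (sub x (sub x y)) (sub y (sub y z))))
            (sub x (sub x y)) = zero :=
          sa_sub_le sub zero sub1 sub2 sub3 sub4 _ _
        have m2 : sub (sub (sub x (sub x y)) (sub (sub x (sub x y)) (sub y (sub y z))))
            (sub y (sub y z)) = zero :=
          sa_meet_right sub zero sub1 sub2 sub3 sub4 _ _
        have m4 := sa_trans sub zero sub1 sub2 sub3 sub4 m2 hBz
        exact sa_le_meet sub zero sub1 sub2 sub3 sub4 m1 m4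
      · have c1 : sub (sub (sub x (sub x y)) (sub (sub x (sub x y)) z)) (sub x (sub x y)) = zero :=
          sa_sub_le sub zero sub1 sub2 sub3 sub4 _ _
        have c2 : sub (sub (sub x (sub x y)) (sub (sub x (sub x y)) z)) z = zero :=
          sa_meet_right sub zero sub1 sub2 sub3 sub4 _ _
        have c3 := sa_trans sub zero sub1 sub2 sub3 sub4 c1 hAy
        have c4 := sa_le_meet sub zero sub1 sub2 sub3 sub4 c3 c2
        exact sa_le_meet sub zero sub1 sub2 sub3 sub4 c1 c4
    rwa [heq] at hk
end

section
/- In any subtraction Menger algebra of rank n, for all x,y,z ∈ G and all polynomials t₁,t₂ ∈ Tₙ(G): t₁(x⋏y⋏z)⋏t₂(y) = t₁(x⋏y)⋏t₂(y⋏z). -/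
/-- In any subtraction Menger algebra of rank `n`, for all `x, y, z` and all
polynomials `t₁, t₂`: `t₁(x⋏y⋏z)⋏t₂(y) = t₁(x⋏y)⋏t₂(y⋏z)`. -/
theorem subtraction_menger_meet_poly_eq {G : Type} {n : ℕ}
    (op : G → (Fin n → G) → G) (sub : G → G → G) (zero : G)
    (superassoc : ∀ (x : G) (y z : Fin n → G),
      op (op x y) z = op x (fun i => op (y i) z))
    (sub1 : ∀ x y : G, sub x (sub y x) = x)
    (sub2 : ∀ x y : G, sub x (sub x y) = sub y (sub y x))
    (sub3 : ∀ x y z : G, sub (sub x y) z = sub (sub x z) y)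
    (sub4 : sub zero zero = zero)
    (distrib : ∀ (x y : G) (z : Fin n → G),
      op (sub x y) z = sub (op x z) (op y z))
    (meetax : ∀ (u : G) (w : Fin n → G) (i : Fin n) (x y : G),
      op u (Function.update w i (sub x (sub x y)))
        = sub (op u (Function.update w i x)) (op u (Function.update w i (sub x y))))
    (steady : ∀ (x y z : G) (t₁ t₂ : G → G), MengerPoly op t₁ → MengerPoly op t₂ →
      sub x y = zero → sub z (t₁ x) = zero → sub z (t₂ y) = zero →
      sub z (t₂ x) = zero)
    :
    ∀ (x y z : G) (t₁ t₂ : G → G), MengerPoly op t₁ → MengerPoly op t₂ →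
      smeet sub (t₁ (smeet sub (smeet sub x y) z)) (t₂ y)
        = smeet sub (t₁ (smeet sub x y)) (t₂ (smeet sub y z)) := by
  -- basic subtraction algebra facts
  have sub_self : ∀ a : G, sub a a = zero := by
    intro a
    have h1 : sub a (sub a a) = a := sub1 a a
    have h2 : sub (sub a a) a = sub a a := by
      have h := sub1 (sub a a) a
      rwa [h1] at h
    have h6 : sub (sub a a) (sub a a) = sub a a := by
      have h := sub2 a (sub a a)
      rw [h1, h2] at h
      exact h.symm
    have h7 : sub zero (sub (sub a a) zero) = zero := sub1 zero (sub a a)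
    have h9 : sub (sub (sub a a) zero) (sub a a) = sub (sub a a) zero := by
      have h := sub3 (sub a a) zero (sub a a)
      rwa [h6] at h
    have h13 : sub (sub a a) (sub (sub a a) zero) = sub a a := by
      have h := sub1 (sub a a) (sub (sub a a) zero)
      rwa [h9] at h
    have h11 : sub (sub (sub a a) zero) zero = sub (sub a a) zero := by
      have h := sub1 (sub (sub a a) zero) zero
      rwa [h7] at h
    have h12 : sub (sub (sub a a) zero) (sub (sub a a) zero) = sub a a := by
      have h := sub2 (sub (sub a a) zero) (sub a a)
      rw [h9, h13, h6] at h
      exact h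
    have h := sub2 (sub (sub a a) zero) zero
    rw [h11, h12, h7, sub4] at h
    exact h
  have sub_zero : ∀ a : G, sub a zero = a := by
    intro a
    have h := sub1 a a
    rwa [sub_self a] at h
  have zero_sub : ∀ a : G, sub zero a = zero := by
    intro a
    have h := sub1 zero a
    rwa [sub_zero a] at h
  have sub_le_self : ∀ a b : G, sub (sub a b) a = zero := by
    intro a b
    have h := sub3 a b a
    rw [sub_self a, zero_sub b] at h
    exact h
  have le_antisymm : ∀ a b : G, sub a b = zero → sub b a = zero → a = b := by
    intro a b hab hba
    have h := sub2 a b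
    rw [hab, hba, sub_zero a, sub_zero b] at h
    exact h
  have eq_of_le : ∀ a b : G, sub a b = zero → sub b (sub b a) = a := by
    intro a b hab
    have h := sub2 b a
    rw [hab, sub_zero a] at h
    exact h
  have le_trans : ∀ a b c : G, sub a b = zero → sub b c = zero → sub a c = zero := by
    intro a b c hab hbc
    have h : sub a c = sub (sub b c) (sub b a) := by
      conv_lhs => rw [← eq_of_le a b hab]
      exact sub3 b (sub b a) c
    rw [h, hbc, zero_sub]
  have sub_red : ∀ a b : G, sub (sub a b) b = sub a b := by
    intro a b
    have h : sub b (sub a b) = b := sub1 b a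
    have h2 := sub1 (sub a b) b
    rwa [h] at h2
  have mono2 : ∀ a b c : G, sub a b = zero → sub (sub c b) (sub c a) = zero := by
    intro a b c hab
    have h := sub3 c b (sub c a)
    rw [sub2 c a, le_trans (sub a (sub a c)) a b (sub_le_self a (sub a c)) hab] at h
    exact h
  have meet_le_left : ∀ a b : G, sub (smeet sub a b) a = zero := fun a b =>
    sub_le_self a (sub a b)
  have meet_comm : ∀ a b : G, smeet sub a b = smeet sub b a := fun a b => sub2 a b
  have meet_le_right : ∀ a b : G, sub (smeet sub a b) b = zero := by
    intro a b; rw [meet_comm a b]; exact meet_le_left b a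
  have le_meet : ∀ a b c : G, sub c a = zero → sub c b = zero →
      sub c (smeet sub a b) = zero := by
    intro a b c hca hcb
    have h2 := mono2 (sub b a) (sub b c) b (mono2 c a b hca)
    rw [eq_of_le c b hcb] at h2
    rw [meet_comm a b]
    show sub c (sub b (sub b a)) = zero
    exact h2
  have le_zero : ∀ a : G, sub a zero = zero → a = zero := by
    intro a h; rw [sub_zero a] at h; exact h
  have dual : ∀ a b c : G, sub a c = zero → sub b c = zero →
      sub a (sub c b) = sub b (sub c a) := by
    intro a b c hac hbc
    calc sub a (sub c b) = sub (sub c (sub c a)) (sub c b) := by rw [eq_of_le a c hac]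
      _ = sub (sub c (sub c b)) (sub c a) := sub3 c (sub c a) (sub c b)
      _ = sub b (sub c a) := by rw [eq_of_le b c hbc]
  have lemF : ∀ a b c : G, sub a c = zero → sub b c = zero → smeet sub a b = zero →
      sub a (sub c b) = zero := by
    intro a b c hac hbc hab0
    have hg1 : sub (sub a (sub c b)) a = zero := sub_le_self a (sub c b)
    have hg2 : sub (sub a (sub c b)) b = zero := by
      rw [dual a b c hac hbc]; exact sub_le_self b (sub c a)
    have h := le_meet a b (sub a (sub c b)) hg1 hg2
    rw [hab0] at h
    exact le_zero _ h
  have lemG : ∀ a b : G, smeet sub (sub a b) b = zero := by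
    intro a b
    show sub (sub a b) (sub (sub a b) b) = zero
    rw [sub_red a b, sub_self]
  -- one-step substitution preserves subtraction of comparable elements
  have onestep : ∀ (a : G) (b : Fin n → G) (i : Fin n) (p q : G), sub q p = zero →
      op a (Function.update b i (sub p q))
        = sub (op a (Function.update b i p)) (op a (Function.update b i q)) := by
    intro a b i p q hqp
    have h := meetax a b i p (sub p q)
    rw [eq_of_le (sub p q) p (sub_le_self p q), eq_of_le q p hqp] at h
    exact h
  -- polynomials preserve subtraction of comparable elements
  have polyC : ∀ t : G → G, MengerPoly op t → ∀ p q : G, sub q p = zero →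
      t (sub p q) = sub (t p) (t q) := by
    intro t ht
    induction ht with
    | id => intro p q _; rfl
    | comp a b i t' ht' ih =>
      intro p q hqp
      have hmono : sub (t' q) (t' p) = zero := by
        have h := ih p (sub p q) (sub_le_self p q)
        rw [eq_of_le q p hqp] at h
        rw [h]
        exact sub_le_self (t' p) (t' (sub p q))
      show op a (Function.update b i (t' (sub p q)))
          = sub (op a (Function.update b i (t' p))) (op a (Function.update b i (t' q)))
      rw [ih p q hqp]
      exact onestep a b i (t' p) (t' q) hmono
  have polyMono : ∀ t : G → G, MengerPoly op t → ∀ p q : G, sub q p = zero →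
      sub (t q) (t p) = zero := by
    intro t ht p q hqp
    have h := polyC t ht p (sub p q) (sub_le_self p q)
    rw [eq_of_le q p hqp] at h
    rw [h]
    exact sub_le_self (t p) (t (sub p q))
  -- main proof
  intro x y z t₁ t₂ h₁ h₂
  set u := smeet sub x y with hu
  set v := smeet sub y z with hv
  set q := smeet sub u z with hq
  set d := sub u z with hd
  set w := smeet sub (t₁ q) (t₂ y) with hw
  set w' := smeet sub (t₁ u) (t₂ v) with hw'
  have hqu : sub q u = zero := by rw [hq]; exact meet_le_left u z
  have huy : sub u y = zero := by rw [hu]; exact meet_le_right x y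
  have hqy : sub q y = zero := le_trans q u y hqu huy
  have hqz : sub q z = zero := by rw [hq]; exact meet_le_right u z
  have hvy : sub v y = zero := by rw [hv]; exact meet_le_left y z
  have hvz : sub v z = zero := by rw [hv]; exact meet_le_right y z
  have hqv : sub q v = zero := by rw [hv]; exact le_meet y z q hqy hqz
  have hw1 : sub w (t₁ q) = zero := by rw [hw]; exact meet_le_left (t₁ q) (t₂ y)
  have hw2 : sub w (t₂ y) = zero := by rw [hw]; exact meet_le_right (t₁ q) (t₂ y)
  have hw3 : sub w (t₂ q) = zero := steady q y w t₁ t₂ h₁ h₂ hqy hw1 hw2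
  have hwu : sub w (t₁ u) = zero := le_trans w (t₁ q) (t₁ u) hw1 (polyMono t₁ h₁ u q hqu)
  have hwv : sub w (t₂ v) = zero := le_trans w (t₂ q) (t₂ v) hw3 (polyMono t₂ h₂ v q hqv)
  have hww' : sub w w' = zero := by rw [hw']; exact le_meet (t₁ u) (t₂ v) w hwu hwv
  have hw'1 : sub w' (t₁ u) = zero := by rw [hw']; exact meet_le_left (t₁ u) (t₂ v)
  have hw'2 : sub w' (t₂ v) = zero := by rw [hw']; exact meet_le_right (t₁ u) (t₂ v)
  have hw'y : sub w' (t₂ y) = zero := le_trans w' (t₂ v) (t₂ y) hw'2 (polyMono t₂ h₂ y v hvy)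
  have hdu : sub d u = zero := by rw [hd]; exact sub_le_self u z
  have hdy : sub d y = zero := le_trans d u y hdu huy
  set f := smeet sub w' (t₁ d) with hf
  have hf1 : sub f w' = zero := by rw [hf]; exact meet_le_left w' (t₁ d)
  have hf2 : sub f (t₁ d) = zero := by rw [hf]; exact meet_le_right w' (t₁ d)
  have hfy : sub f (t₂ y) = zero := le_trans f w' (t₂ y) hf1 hw'y
  have hfd : sub f (t₂ d) = zero := steady d y f t₁ t₂ h₁ h₂ hdy hf2 hfy
  have hdz0 : smeet sub d z = zero := by rw [hd]; exact lemG u z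
  have hdv0 : smeet sub d v = zero := by
    have hm1 : sub (smeet sub d v) d = zero := meet_le_left d v
    have hm2 : sub (smeet sub d v) z = zero :=
      le_trans (smeet sub d v) v z (meet_le_right d v) hvz
    have h3 := le_meet d z (smeet sub d v) hm1 hm2
    rw [hdz0] at h3
    exact le_zero _ h3
  have hdyv : sub d (sub y v) = zero := lemF d v y hdy hvy hdv0
  have hfd2 : sub f (t₂ (sub y v)) = zero :=
    le_trans f (t₂ d) (t₂ (sub y v)) hfd (polyMono t₂ h₂ (sub y v) d hdyv)
  have hC : t₂ (sub y v) = sub (t₂ y) (t₂ v) := polyC t₂ h₂ y v hvy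
  rw [hC] at hfd2
  have hfv : sub f (t₂ v) = zero := le_trans f w' (t₂ v) hf1 hw'2
  have hf0 : f = zero := by
    have h := le_meet (sub (t₂ y) (t₂ v)) (t₂ v) f hfd2 hfv
    rw [lemG (t₂ y) (t₂ v)] at h
    exact le_zero _ h
  have hfq : smeet sub w' (t₁ d) = zero := by rw [← hf]; exact hf0
  have hqd : q = sub u d := by rw [hq, hd]; rfl
  have hw'q : sub w' (t₁ q) = zero := by
    have hmq : t₁ q = sub (t₁ u) (t₁ d) := by rw [hqd]; exact polyC t₁ h₁ u d hdu
    rw [hmq]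
    exact lemF w' (t₁ d) (t₁ u) hw'1 (polyMono t₁ h₁ u d hdu) hfq
  have hw'w : sub w' w = zero := by rw [hw]; exact le_meet (t₁ q) (t₂ y) w' hw'q hw'y
  exact le_antisymm w w' hww' hw'w
end

section
/- Let (G,o,−,0) be a subtraction Menger algebra of rank n, let a,b ∈ G with a ≰ b, and let F be a filter of G that is maximal among filters containing a and not containing b. Define W = {x ∈ G : t(x) ∉ F for every t ∈ Tₙ(G)} and ε = {(x,y) ∈ G×G : x⋏y ∉ W, or (x ∈ W and y ∈ W)}. Then: ε is an equivalence relation on G; ε is i-regular for every 1 ≤ i ≤ n (i.e. (x,y) ∈ ε implies (u[w̄|ᵢx], u[w̄|ᵢy]) ∈ ε for all u ∈ G, w̄ ∈ Gⁿ); W is an l-ideal of (G,o) (i.e. x[h₁…hₙ] ∈ W whenever x,h₁,…,hₙ ∈ G and hᵢ ∈ W for at least one i); and W is an ε-equivalence class. -/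
/-- A filter of a subtraction Menger algebra: a nonempty subset `F` with
`0 ∉ F`, upward closed under `≤` (where `x ≤ y` means `x − y = 0`), and closed
under the meet `x ⋏ y = x − (x − y)`. -/
def IsSMFilter {G : Type} (sub : G → G → G) (zero : G) (F : Set G) : Prop :=
  F.Nonempty ∧ zero ∉ F ∧
    (∀ x y : G, x ∈ F → sub x y = zero → y ∈ F) ∧
    (∀ x y : G, x ∈ F → y ∈ F → sub x (sub x y) ∈ F)

/-- `Wset op F = {x ∈ G : t(x) ∉ F for every polynomial t ∈ Tₙ(G)}`. -/
def Wset {G : Type} {n : ℕ} (op : G → (Fin n → G) → G) (F : Set G) : Set G :=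
  {x | ∀ t : G → G, MengerPoly op t → t x ∉ F}

/-- `epsRel op sub F x y` iff `x⋏y ∉ W` or both `x, y ∈ W`, where
`W = Wset op F`. -/
def epsRel {G : Type} {n : ℕ} (op : G → (Fin n → G) → G) (sub : G → G → G)
    (F : Set G) (x y : G) : Prop :=
  sub x (sub x y) ∉ Wset op F ∨ (x ∈ Wset op F ∧ y ∈ Wset op F)

/-- For a maximal filter `F` containing `a` and omitting `b` (with `a ≰ b`),
the pair `(ε, W)` built from `F` is a determining pair: `ε` is an `i`-regular
equivalence relation, `W` is an `l`-ideal and an `ε`-class. -/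
theorem subtraction_menger_determining_pair {G : Type} {n : ℕ}
    (op : G → (Fin n → G) → G) (sub : G → G → G) (zero : G)
    (superassoc : ∀ (x : G) (y z : Fin n → G),
      op (op x y) z = op x (fun i => op (y i) z))
    (sub1 : ∀ x y : G, sub x (sub y x) = x)
    (sub2 : ∀ x y : G, sub x (sub x y) = sub y (sub y x))
    (sub3 : ∀ x y z : G, sub (sub x y) z = sub (sub x z) y)
    (sub4 : sub zero zero = zero)
    (distrib : ∀ (x y : G) (z : Fin n → G),
      op (sub x y) z = sub (op x z) (op y z))
    (meetax : ∀ (u : G) (w : Fin n → G) (i : Fin n) (x y : G),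
      op u (Function.update w i (sub x (sub x y)))
        = sub (op u (Function.update w i x)) (op u (Function.update w i (sub x y))))
    (steady : ∀ (x y z : G) (t₁ t₂ : G → G), MengerPoly op t₁ → MengerPoly op t₂ →
      sub x y = zero → sub z (t₁ x) = zero → sub z (t₂ y) = zero →
      sub z (t₂ x) = zero)
    (a b : G) (hab : sub a b ≠ zero)
    (F : Set G) (hF : IsSMFilter sub zero F) (haF : a ∈ F) (hbF : b ∉ F)
    (hFmax : ∀ F' : Set G, IsSMFilter sub zero F' → a ∈ F' → b ∉ F' →
      F ⊆ F' → F' = F)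
    :
    Equivalence (epsRel op sub F) ∧
    (∀ (x y u : G) (w : Fin n → G) (i : Fin n), epsRel op sub F x y →
      epsRel op sub F (op u (Function.update w i x))
        (op u (Function.update w i y))) ∧
    (∀ (x : G) (h : Fin n → G), (∃ i, h i ∈ Wset op F) →
      op x h ∈ Wset op F) ∧
    (∃ x₀ : G, Wset op F = {y | epsRel op sub F x₀ y}) := by
  
  classical
  obtain ⟨hFne, hF0, hup, hmeet⟩ := hF
  -- ===== subtraction algebra basics =====
  have h0x : ∀ x : G, sub zero x = zero := by
    intro x
    calc sub zero x
        = sub (sub zero x) (sub zero (sub zero x)) := (sub1 (sub zero x) zero).symm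
      _ = sub (sub zero (sub zero (sub zero x))) x := sub3 zero x (sub zero (sub zero x))
      _ = sub (sub (sub zero x) (sub (sub zero x) zero)) x := by
            rw [sub2 zero (sub zero x)]
      _ = sub (sub (sub zero x) (sub (sub zero zero) x)) x := by rw [← sub3 zero x zero]
      _ = sub (sub (sub zero x) (sub zero x)) x := by rw [sub4]
      _ = sub (sub (sub zero x) x) (sub zero x) := sub3 (sub zero x) (sub zero x) x
      _ = sub (sub (sub zero x) (sub x (sub zero x))) (sub zero x) := by rw [sub1 x zero]
      _ = sub (sub zero x) (sub zero x) := by rw [sub1 (sub zero x) x]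
      _ = sub (sub zero x) (sub (sub zero zero) x) := by rw [sub4]
      _ = sub (sub zero x) (sub (sub zero x) zero) := by rw [sub3 zero x zero]
      _ = sub zero (sub zero (sub zero x)) := sub2 (sub zero x) zero
      _ = sub zero (sub (sub zero zero) (sub zero x)) := by rw [sub4]
      _ = sub zero (sub (sub zero (sub zero x)) zero) := by rw [sub3 zero zero (sub zero x)]
      _ = zero := sub1 zero (sub zero (sub zero x))
  have hxx : ∀ x : G, sub x x = zero := by
    intro x
    calc sub x x
        = sub x (sub x (sub zero x)) := by rw [sub1 x zero]
      _ = sub (sub zero x) (sub (sub zero x) x) := sub2 x (sub zero x)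
      _ = zero := by rw [h0x x, h0x x, sub4]
  have hx0 : ∀ x : G, sub x zero = x := by
    intro x
    rw [← hxx x]
    exact sub1 x x
  have subsub : ∀ p q : G, sub (sub p q) p = zero := by
    intro p q
    rw [sub3 p q p, hxx p]
    exact h0x q
  have p7b : ∀ x y z : G, sub (sub (sub x y) (sub x z)) (sub z y) = zero := by
    intro x y z
    calc sub (sub (sub x y) (sub x z)) (sub z y)
        = sub (sub (sub x (sub x z)) y) (sub z y) := by rw [sub3 x y (sub x z)]
      _ = sub (sub (sub z (sub z x)) y) (sub z y) := by rw [sub2 x z]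
      _ = sub (sub (sub z y) (sub z x)) (sub z y) := by rw [← sub3 z y (sub z x)]
      _ = sub (sub (sub z y) (sub z y)) (sub z x) := sub3 (sub z y) (sub z x) (sub z y)
      _ = sub zero (sub z x) := by rw [hxx (sub z y)]
      _ = zero := h0x (sub z x)
  have p7a : ∀ x y z : G, sub (sub (sub x y) (sub z y)) (sub x z) = zero := by
    intro x y z
    rw [sub3 (sub x y) (sub z y) (sub x z)]
    exact p7b x y z
  have le_trans' : ∀ x y z : G, sub x y = zero → sub y z = zero → sub x z = zero := by
    intro x y z h1 h2
    have h := p7a x z y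
    rw [h1, hx0, h2, hx0] at h
    exact h
  have le_zero' : ∀ x : G, sub x zero = zero → x = zero := by
    intro x h
    rw [← hx0 x]
    exact h
  have antisymm' : ∀ x y : G, sub x y = zero → sub y x = zero → x = y := by
    intro x y h1 h2
    calc x = sub x zero := (hx0 x).symm
      _ = sub x (sub x y) := by rw [h1]
      _ = sub y (sub y x) := sub2 x y
      _ = sub y zero := by rw [h2]
      _ = y := hx0 y
  have meet_le_right : ∀ x y : G, sub (sub x (sub x y)) y = zero := by
    intro x y
    rw [sub2 x y]
    exact subsub y (sub y x)
  have meet_sub_zero : ∀ x y : G, sub (sub x y) (sub (sub x y) y) = zero := by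
    intro x y
    rw [sub2 (sub x y) y, sub1 y x, hxx y]
  have p6' : ∀ x c : G, sub x (sub x (sub x c)) = sub x c := by
    intro x c
    rw [sub2 x (sub x c), subsub x c, hx0]
  have meet_eq_right : ∀ x c : G, sub c x = zero → sub x (sub x c) = c := by
    intro x c h
    rw [sub2 x c, h, hx0]
  have le_meet : ∀ x y z : G, sub z x = zero → sub z y = zero →
      sub z (sub x (sub x y)) = zero := by
    intro x y z hzx hzy
    have hq : sub (sub x y) (sub x z) = zero := by
      have h := p7b x y z
      rw [hzy, hx0] at h
      exact h
    have key : sub (sub x (sub x z)) (sub x (sub x y)) = zero := by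
      have h := p7b x (sub x z) (sub x y)
      rw [hq, hx0] at h
      exact h
    rw [meet_eq_right x z hzx] at key
    exact key
  -- ===== Menger basics =====
  have basic_mono : ∀ (a' : G) (b' : Fin n → G) (i : Fin n) (X Y : G), sub X Y = zero →
      sub (op a' (Function.update b' i X)) (op a' (Function.update b' i Y)) = zero := by
    intro a' b' i X Y h
    have e : sub Y (sub Y X) = X := by rw [sub2 Y X, h, hx0]
    have hme := meetax a' b' i Y X
    rw [e] at hme
    rw [hme]
    exact subsub _ _
  have basic_zero : ∀ (a' : G) (b' : Fin n → G) (i : Fin n),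
      op a' (Function.update b' i zero) = zero := by
    intro a' b' i
    have hme := meetax a' b' i zero zero
    rw [sub4, sub4] at hme
    rw [hme, hxx]
  have basic_subM : ∀ (a' : G) (b' : Fin n → G) (i : Fin n) (X C : G), sub C X = zero →
      op a' (Function.update b' i (sub X C))
        = sub (op a' (Function.update b' i X)) (op a' (Function.update b' i C)) := by
    intro a' b' i X C h
    have hme := meetax a' b' i X (sub X C)
    rw [p6' X C] at hme
    rw [meet_eq_right X C h] at hme
    exact hme
  have basic_meet : ∀ (a' : G) (b' : Fin n → G) (i : Fin n) (U V W : G),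
      sub U W = zero → sub V W = zero →
      sub (sub (op a' (Function.update b' i U))
            (sub (op a' (Function.update b' i U)) (op a' (Function.update b' i V))))
          (op a' (Function.update b' i (sub U (sub U V)))) = zero := by
    intro a' b' i U V W hU hV
    set A := op a' (Function.update b' i U) with hA
    set B := op a' (Function.update b' i V) with hB
    set D := op a' (Function.update b' i (sub U V)) with hD
    set Wg := op a' (Function.update b' i W) with hWg
    have s1 : sub (sub U V) (sub W V) = zero := by
      have h := p7a U V W
      rw [hU, hx0] at h
      exact h
    have s2 : sub D (sub Wg B) = zero := by
      have h : sub D (op a' (Function.update b' i (sub W V))) = zero :=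
        basic_mono a' b' i _ _ s1
      rw [basic_subM a' b' i W V hV] at h
      exact h
    have hpA : sub (sub A (sub A B)) A = zero := subsub _ _
    have hpB : sub (sub A (sub A B)) B = zero := meet_le_right _ _
    set p := sub A (sub A B) with hp
    have hzp : sub (sub p (sub p D)) p = zero := subsub _ _
    have hzD : sub (sub p (sub p D)) D = zero := meet_le_right _ _
    have hzB : sub (sub p (sub p D)) B = zero := le_trans' _ p B hzp hpB
    have hzWB : sub (sub p (sub p D)) (sub Wg B) = zero := le_trans' _ D (sub Wg B) hzD s2
    have hzmeet := le_meet (sub Wg B) B (sub p (sub p D)) hzWB hzB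
    rw [meet_sub_zero Wg B] at hzmeet
    have hz0 : sub p (sub p D) = zero := le_zero' _ hzmeet
    have hpD : sub p D = p := antisymm' (sub p D) p (subsub p D) hz0
    rw [meetax a' b' i U V]
    have h := p7a p D A
    rw [hpA, hx0, hpD] at h
    exact h
  -- ===== polynomial lemmas =====
  have P1 : ∀ t s : G → G, MengerPoly op t → MengerPoly op s →
      MengerPoly op (fun x => t (s x)) := by
    intro t s ht hs
    induction ht with
    | id => exact hs
    | comp a' b' i t' ht' ih => exact MengerPoly.comp a' b' i (fun x => t' (s x)) ih
  have P2 : ∀ t : G → G, MengerPoly op t → ∀ X Y : G, sub X Y = zero →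
      sub (t X) (t Y) = zero := by
    intro t ht
    induction ht with
    | id => intro X Y h; exact h
    | comp a' b' i t' ht' ih =>
      intro X Y h
      exact basic_mono a' b' i _ _ (ih X Y h)
  have P3 : ∀ t : G → G, MengerPoly op t → t zero = zero := by
    intro t ht
    induction ht with
    | id => rfl
    | comp a' b' i t' ht' ih =>
      show op a' (Function.update b' i (t' zero)) = zero
      rw [ih]
      exact basic_zero a' b' i
  have P6 : ∀ t : G → G, MengerPoly op t → ∀ u v w : G, sub u w = zero → sub v w = zero →
      sub (sub (t u) (sub (t u) (t v))) (t (sub u (sub u v))) = zero := by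
    intro t ht
    induction ht with
    | id => intro u v w hu hv; exact hxx _
    | comp a' b' i t' ht' ih =>
      intro u v w hu hv
      have h1 : sub (t' u) (t' w) = zero := P2 t' ht' u w hu
      have h2 : sub (t' v) (t' w) = zero := P2 t' ht' v w hv
      have hbm := basic_meet a' b' i (t' u) (t' v) (t' w) h1 h2
      have hih := ih u v w hu hv
      have hmono := basic_mono a' b' i _ _ hih
      exact le_trans' _ _ _ hbm hmono
  -- ===== filter/W lemmas =====
  have notW : ∀ x : G, x ∉ Wset op F → ∃ t, MengerPoly op t ∧ t x ∈ F := by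
    intro x hx
    by_contra hcon
    push_neg at hcon
    exact hx (show x ∈ Wset op F from fun t ht => hcon t ht)
  have Kprime : ∀ c y : G, sub c y = zero → c ∉ Wset op F →
      ∀ t : G → G, MengerPoly op t → t y ∈ F → t c ∈ F := by
    intro c y hcy hcW t ht hty
    obtain ⟨s, hs, hsF⟩ := notW c hcW
    have hzF : sub (s c) (sub (s c) (t y)) ∈ F := hmeet _ _ hsF hty
    have h1 : sub (sub (s c) (sub (s c) (t y))) (s c) = zero := subsub _ _
    have h2 : sub (sub (s c) (sub (s c) (t y))) (t y) = zero := meet_le_right _ _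
    have h3 := steady c y (sub (s c) (sub (s c) (t y))) s t hs ht hcy h1 h2
    exact hup _ _ hzF h3
  have Wdown : ∀ c x : G, sub c x = zero → x ∈ Wset op F → c ∈ Wset op F := by
    intro c x h hx
    have hx' : ∀ t : G → G, MengerPoly op t → t x ∉ F := hx
    show ∀ t : G → G, MengerPoly op t → t c ∉ F
    intro t ht htF
    exact hx' t ht (hup (t c) (t x) htF (P2 t ht c x h))
  have hzeroW : zero ∈ Wset op F := by
    show ∀ t : G → G, MengerPoly op t → t zero ∉ F
    intro t ht
    rw [P3 t ht]
    exact hF0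
  refine ⟨⟨?_, ?_, ?_⟩, ?_, ?_, ?_⟩
  · -- reflexivity
    intro x
    by_cases hx : x ∈ Wset op F
    · exact Or.inr ⟨hx, hx⟩
    · refine Or.inl ?_
      rw [hxx x, hx0 x]
      exact hx
  · -- symmetry
    intro x y h
    rcases (h : _ ∨ _) with h1 | ⟨h1, h2⟩
    · refine Or.inl ?_
      rw [← sub2 x y]
      exact h1
    · exact Or.inr ⟨h2, h1⟩
  · -- transitivity
    intro x y z h1 h2
    rcases (h1 : _ ∨ _) with h1 | ⟨ha, hb⟩ <;> rcases (h2 : _ ∨ _) with h2 | ⟨hc, hd⟩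
    · -- both left
      obtain ⟨t1, ht1, ht1F⟩ := notW _ h1
      have hm1y : sub (sub x (sub x y)) y = zero := meet_le_right x y
      have hm2y : sub (sub y (sub y z)) y = zero := subsub y (sub y z)
      have ht1y : t1 y ∈ F := hup _ _ ht1F (P2 t1 ht1 _ y hm1y)
      have ht1m2 : t1 (sub y (sub y z)) ∈ F := Kprime (sub y (sub y z)) y hm2y h2 t1 ht1 ht1y
      have hq : sub (t1 (sub x (sub x y)))
          (sub (t1 (sub x (sub x y))) (t1 (sub y (sub y z)))) ∈ F := hmeet _ _ ht1F ht1m2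
      have hP6 := P6 t1 ht1 (sub x (sub x y)) (sub y (sub y z)) y hm1y hm2y
      have hmm : sub (sub (sub x (sub x y))
          (sub (sub x (sub x y)) (sub y (sub y z)))) (sub x (sub x z)) = zero := by
        refine le_meet x z _ ?_ ?_
        · exact le_trans' _ (sub x (sub x y)) x (subsub _ _) (subsub x (sub x y))
        · exact le_trans' _ (sub y (sub y z)) z (meet_le_right _ _) (meet_le_right y z)
      have hmono := P2 t1 ht1 _ _ hmm
      have hfinal : t1 (sub x (sub x z)) ∈ F := hup _ _ (hup _ _ hq hP6) hmono
      refine Or.inl ?_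
      intro hW
      exact (hW : ∀ t : G → G, MengerPoly op t → t (sub x (sub x z)) ∉ F) t1 ht1 hfinal
    · exact absurd (Wdown _ y (meet_le_right x y) hc) h1
    · exact absurd (Wdown _ y (subsub y (sub y z)) hb) h2
    · exact Or.inr ⟨ha, hd⟩
  · -- i-regularity
    intro x y u w i h
    have hg : MengerPoly op (fun v => op u (Function.update w i v)) :=
      MengerPoly.comp u w i (fun v => v) MengerPoly.id
    rcases (h : _ ∨ _) with h1 | ⟨hx, hy⟩
    · by_cases hgm : op u (Function.update w i (sub x (sub x y))) ∈ Wset op F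
      · refine Or.inr ⟨?_, ?_⟩
        · show ∀ t : G → G, MengerPoly op t → t (op u (Function.update w i x)) ∉ F
          intro s hs hsF
          have hcomp : MengerPoly op (fun v => s (op u (Function.update w i v))) :=
            P1 s _ hs hg
          have hKp := Kprime (sub x (sub x y)) x (subsub x (sub x y)) h1 _ hcomp hsF
          exact (hgm : ∀ t : G → G, MengerPoly op t →
            t (op u (Function.update w i (sub x (sub x y)))) ∉ F) s hs hKp
        · show ∀ t : G → G, MengerPoly op t → t (op u (Function.update w i y)) ∉ F
          intro s hs hsF
          have hcomp : MengerPoly op (fun v => s (op u (Function.update w i v))) :=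
            P1 s _ hs hg
          have hKp := Kprime (sub x (sub x y)) y (meet_le_right x y) h1 _ hcomp hsF
          exact (hgm : ∀ t : G → G, MengerPoly op t →
            t (op u (Function.update w i (sub x (sub x y)))) ∉ F) s hs hKp
      · obtain ⟨s, hs, hsF⟩ := notW _ hgm
        refine Or.inl ?_
        intro hW
        have hle : sub (op u (Function.update w i (sub x (sub x y))))
            (sub (op u (Function.update w i x))
              (sub (op u (Function.update w i x)) (op u (Function.update w i y)))) = zero := by
          refine le_meet _ _ _ ?_ ?_
          · exact basic_mono u w i _ _ (subsub x (sub x y))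
          · exact basic_mono u w i _ _ (meet_le_right x y)
        have hsF2 : s (sub (op u (Function.update w i x))
            (sub (op u (Function.update w i x)) (op u (Function.update w i y)))) ∈ F :=
          hup _ _ hsF (P2 s hs _ _ hle)
        exact (hW : ∀ t : G → G, MengerPoly op t →
          t (sub (op u (Function.update w i x))
            (sub (op u (Function.update w i x)) (op u (Function.update w i y)))) ∉ F) s hs hsF2
    · refine Or.inr ⟨?_, ?_⟩
      · show ∀ t : G → G, MengerPoly op t → t (op u (Function.update w i x)) ∉ F
        intro s hs hsF
        exact (hx : ∀ t : G → G, MengerPoly op t → t x ∉ F)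
          (fun v => s (op u (Function.update w i v))) (P1 s _ hs hg) hsF
      · show ∀ t : G → G, MengerPoly op t → t (op u (Function.update w i y)) ∉ F
        intro s hs hsF
        exact (hy : ∀ t : G → G, MengerPoly op t → t y ∉ F)
          (fun v => s (op u (Function.update w i v))) (P1 s _ hs hg) hsF
  · -- l-ideal
    intro x h hex
    obtain ⟨i, hi⟩ := hex
    show ∀ t : G → G, MengerPoly op t → t (op x h) ∉ F
    intro t ht htF
    have hpoly : MengerPoly op (fun v => t (op x (Function.update h i v))) :=
      P1 t _ ht (MengerPoly.comp x h i (fun v => v) MengerPoly.id)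
    have h2 : t (op x (Function.update h i (h i))) ∈ F := by
      rw [Function.update_eq_self]
      exact htF
    exact (hi : ∀ s : G → G, MengerPoly op s → s (h i) ∉ F) _ hpoly h2
  · -- W is an ε-class
    refine ⟨zero, ?_⟩
    ext v
    simp only [Set.mem_setOf_eq]
    constructor
    · intro hv
      exact Or.inr ⟨hzeroW, hv⟩
    · intro hv
      rcases (hv : _ ∨ _) with h1 | ⟨_, h2⟩
      · exfalso
        apply h1
        rw [h0x v, sub4]
        exact hzeroW
      · exact h2
end

section
/- Let (G,o,−,0) be a subtraction Menger algebra of rank n, let a,b ∈ G with a ≰ b, and let F be a filter of G that is maximal among filters containing a and not containing b. Define W = {x ∈ G : t(x) ∉ F for every t ∈ Tₙ(G)} and ε = {(x,y) ∈ G×G : x⋏y ∉ W, or (x ∈ W and y ∈ W)}. Then every ε-equivalence class different from W is a filter of G. -/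
/-- Every `ε`-equivalence class different from `W` is a filter. -/
theorem subtraction_menger_class_is_filter {G : Type} {n : ℕ}
    (op : G → (Fin n → G) → G) (sub : G → G → G) (zero : G)
    (superassoc : ∀ (x : G) (y z : Fin n → G),
      op (op x y) z = op x (fun i => op (y i) z))
    (sub1 : ∀ x y : G, sub x (sub y x) = x)
    (sub2 : ∀ x y : G, sub x (sub x y) = sub y (sub y x))
    (sub3 : ∀ x y z : G, sub (sub x y) z = sub (sub x z) y)
    (sub4 : sub zero zero = zero)
    (distrib : ∀ (x y : G) (z : Fin n → G),
      op (sub x y) z = sub (op x z) (op y z))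
    (meetax : ∀ (u : G) (w : Fin n → G) (i : Fin n) (x y : G),
      op u (Function.update w i (sub x (sub x y)))
        = sub (op u (Function.update w i x)) (op u (Function.update w i (sub x y))))
    (steady : ∀ (x y z : G) (t₁ t₂ : G → G), MengerPoly op t₁ → MengerPoly op t₂ →
      sub x y = zero → sub z (t₁ x) = zero → sub z (t₂ y) = zero →
      sub z (t₂ x) = zero)
    (a b : G) (hab : sub a b ≠ zero)
    (F : Set G) (hF : IsSMFilter sub zero F) (haF : a ∈ F) (hbF : b ∉ F)
    (hFmax : ∀ F' : Set G, IsSMFilter sub zero F' → a ∈ F' → b ∉ F' →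
      F ⊆ F' → F' = F)
    :
    ∀ x : G, {y | epsRel op sub F x y} ≠ Wset op F →
      IsSMFilter sub zero {y | epsRel op sub F x y} := by
  -- ## Basic subtraction algebra facts
  have smD : ∀ a b : G, sub a (sub a (sub b b)) = sub b b := by
    intro a b
    have h1 : sub (sub b b) a = sub (sub b a) b := sub3 b b a
    calc sub a (sub a (sub b b)) = sub (sub b b) (sub (sub b b) a) := sub2 a (sub b b)
      _ = sub (sub b b) (sub (sub b a) b) := by rw [h1]
      _ = sub (sub b (sub (sub b a) b)) b := sub3 b b _
      _ = sub b b := by rw [sub1 b (sub b a)]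
  have sub_self : ∀ x : G, sub x x = zero := by
    intro x
    have h3 := sub2 (sub x x) (sub zero zero)
    rw [smD (sub x x) zero, smD (sub zero zero) x] at h3
    rw [sub4] at h3
    exact h3.symm
  have sub_zero : ∀ x : G, sub x zero = x := by
    intro x; have h := sub1 x x; rwa [sub_self x] at h
  have zero_sub : ∀ x : G, sub zero x = zero := by
    intro x
    have h := sub1 (sub x x) x
    rw [sub_self x] at h
    rwa [sub_zero x] at h
  have antisymm : ∀ x y : G, sub x y = zero → sub y x = zero → x = y := by
    intro x y h1 h2
    have h := sub2 x y
    rw [h1, h2, sub_zero, sub_zero] at h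
    exact h
  have sub_le : ∀ x y : G, sub (sub x y) x = zero := by
    intro x y
    rw [sub3 x y x, sub_self, zero_sub]
  have meet_of_le : ∀ c d : G, sub c d = zero → sub d (sub d c) = c := by
    intro c d h
    have e := sub2 d c
    rw [h, sub_zero] at e
    exact e
  have double_sub : ∀ x y : G, sub x (sub x (sub x y)) = sub x y :=
    fun x y => meet_of_le (sub x y) x (sub_le x y)
  have meet_le_right : ∀ x y : G, sub (sub x (sub x y)) y = zero := by
    intro x y; rw [sub2 x y]; exact sub_le y (sub y x)
  have le_trans : ∀ x y z : G, sub x y = zero → sub y z = zero → sub x z = zero := by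
    intro x y z h1 h2
    have hx : x = sub y (sub y x) := (meet_of_le x y h1).symm
    rw [hx, sub3 y (sub y x) z, h2, zero_sub]
  have le_antitone : ∀ x y z : G, sub y z = zero → sub (sub x z) (sub x y) = zero := by
    intro x y z h
    rw [sub3 x z (sub x y)]
    exact le_trans _ _ _ (meet_le_right x y) h
  have le_mono : ∀ x y z : G, sub x y = zero → sub (sub x z) (sub y z) = zero := by
    intro x y z h
    have hx : x = sub y (sub y x) := (meet_of_le x y h).symm
    rw [hx, sub3 y (sub y x) z]
    exact sub_le (sub y z) (sub y x)
  have L4 : ∀ x y e : G, sub (sub (sub x e) (sub y e)) (sub x y) = zero := by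
    intro x y e
    rw [sub3 (sub x e) (sub y e) (sub x y), sub3 x e (sub x y)]
    exact le_mono _ _ _ (meet_le_right x y)
  have sub_sub_cancel : ∀ a' b' : G, sub (sub a' b') b' = sub a' b' := by
    intro a' b'
    refine antisymm _ _ ?_ ?_
    · rw [sub3 (sub a' b') b' (sub a' b'), sub_self, zero_sub]
    · have h := sub2 (sub a' b') b'
      rw [sub1 b' a'] at h
      rw [h, sub_self]
  have le_meet : ∀ x y z : G, sub z x = zero → sub z y = zero →
      sub z (sub x (sub x y)) = zero := by
    intro x y z hzx hzy
    have hz : z = sub x (sub x z) := (meet_of_le z x hzx).symm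
    rw [hz, sub3 x (sub x z) (sub x (sub x y)), double_sub]
    exact le_antitone x z y hzy
  have meet_mono : ∀ a' b' c d : G, sub a' c = zero → sub b' d = zero →
      sub (sub a' (sub a' b')) (sub c (sub c d)) = zero := by
    intro a' b' c d hac hbd
    exact le_meet _ _ _ (le_trans _ _ _ (sub_le a' (sub a' b')) hac)
      (le_trans _ _ _ (meet_le_right a' b') hbd)
  have lem14 : ∀ m c e : G, sub m c = zero → sub m (sub m e) = zero →
      sub m (sub c e) = zero := by
    intro m c e hmc hme
    have hmeq : m = sub m e := antisymm _ _ hme (sub_le m e)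
    have h := L4 m c e
    rw [hmc, sub_zero] at h
    rw [hmeq]
    exact h
  have meet3 : ∀ x y z : G,
      sub (sub x (sub x y)) (sub (sub x (sub x y)) (sub x (sub x z)))
        = sub x (sub x (sub y (sub y z))) := by
    intro x y z
    refine antisymm _ _ ?_ ?_
    · refine le_meet _ _ _ ?_ ?_
      · exact le_trans _ _ _ (sub_le _ _) (sub_le x (sub x y))
      · refine le_meet _ _ _ ?_ ?_
        · exact le_trans _ _ _ (sub_le _ _) (meet_le_right x y)
        · exact le_trans _ _ _ (meet_le_right _ _) (meet_le_right x z)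
    · refine le_meet _ _ _ ?_ ?_
      · refine le_meet _ _ _ ?_ ?_
        · exact sub_le x (sub x (sub y (sub y z)))
        · exact le_trans _ _ _ (meet_le_right _ _) (sub_le y (sub y z))
      · refine le_meet _ _ _ ?_ ?_
        · exact sub_le x (sub x (sub y (sub y z)))
        · exact le_trans _ _ _ (meet_le_right _ _) (meet_le_right y z)
  -- ## Polynomial facts
  have poly_mono : ∀ t : G → G, MengerPoly op t → ∀ x y : G, sub x y = zero →
      sub (t x) (t y) = zero := by
    intro t ht
    induction ht with
    | id => intro x y h; exact h
    | comp a' b' i' t' ht' ih =>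
      intro x y h
      have hxy := ih x y h
      have h1 := meetax a' b' i' (t' y) (t' x)
      rw [meet_of_le _ _ hxy] at h1
      show sub (op a' (Function.update b' i' (t' x)))
        (op a' (Function.update b' i' (t' y))) = zero
      rw [h1]
      exact sub_le _ _
  have poly_sub : ∀ t : G → G, MengerPoly op t → ∀ c e : G, sub e c = zero →
      t (sub c e) = sub (t c) (t e) := by
    intro t ht
    induction ht with
    | id => intro c e h; rfl
    | comp a' b' i' t' ht' ih =>
      intro c e hec
      show op a' (Function.update b' i' (t' (sub c e)))
          = sub (op a' (Function.update b' i' (t' c))) (op a' (Function.update b' i' (t' e)))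
      rw [ih c e hec]
      have hEC : sub (t' e) (t' c) = zero := poly_mono t' ht' e c hec
      have h1 := meetax a' b' i' (t' c) (sub (t' c) (t' e))
      rw [double_sub] at h1
      rw [meet_of_le _ _ hEC] at h1
      exact h1
  have zeroW : zero ∈ Wset op F := by
    intro t ht htF
    have h := steady zero (t zero) (t zero) t (fun x => x) ht MengerPoly.id
      (zero_sub (t zero)) (sub_self (t zero)) (sub_self (t zero))
    have h' : sub (t zero) zero = zero := h
    rw [sub_zero] at h'
    rw [h'] at htF
    exact hF.2.1 htF
  have Wdown : ∀ w x' : G, sub w x' = zero → x' ∈ Wset op F → w ∈ Wset op F := by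
    intro w x' hle hx' t ht htF
    exact hx' t ht (hF.2.2.1 (t w) (t x') htF (poly_mono t ht w x' hle))
  -- ## Main argument
  intro x hC
  have hxW : x ∉ Wset op F := by
    intro hxW
    apply hC
    ext y
    constructor
    · intro hy
      have h' : (sub x (sub x y) ∉ Wset op F) ∨ (x ∈ Wset op F ∧ y ∈ Wset op F) := hy
      rcases h' with h1 | h2
      · exact absurd (Wdown (sub x (sub x y)) x (sub_le x (sub x y)) hxW) h1
      · exact h2.2
    · intro hy
      exact Or.inr ⟨hxW, hy⟩
  have hchar : ∀ y : G, epsRel op sub F x y ↔ sub x (sub x y) ∉ Wset op F := by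
    intro y
    constructor
    · intro h
      have h' : (sub x (sub x y) ∉ Wset op F) ∨ (x ∈ Wset op F ∧ y ∈ Wset op F) := h
      rcases h' with h1 | h2
      · exact h1
      · exact absurd h2.1 hxW
    · intro h
      exact Or.inl h
  refine ⟨⟨x, ?_⟩, ?_, ?_, ?_⟩
  · refine (hchar x).mpr ?_
    rw [sub_self, sub_zero]
    exact hxW
  · intro hz
    have h := (hchar zero).mp hz
    apply h
    rw [sub_zero, sub_self]
    exact zeroW
  · intro y y' hy hle
    refine (hchar y').mpr ?_
    intro hW
    exact (hchar y).mp hy (Wdown _ _ (meet_mono x y x y' (sub_self x) hle) hW)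
  · intro y z hy hz
    refine (hchar _).mpr ?_
    rw [← meet3 x y z]
    set u := sub x (sub x y) with hu
    set v := sub x (sub x z) with hv
    have hy' : u ∉ Wset op F := (hchar y).mp hy
    have hz' : v ∉ Wset op F := (hchar z).mp hz
    have hy'' : ∃ t, MengerPoly op t ∧ t u ∈ F := by
      by_contra h
      exact hy' (fun t ht htF => h ⟨t, ht, htF⟩)
    have hz'' : ∃ t, MengerPoly op t ∧ t v ∈ F := by
      by_contra h
      exact hz' (fun t ht htF => h ⟨t, ht, htF⟩)
    obtain ⟨t₁, ht₁, ht₁F⟩ := hy''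
    obtain ⟨t₂, ht₂, ht₂F⟩ := hz''
    have hmF : sub (t₁ u) (sub (t₁ u) (t₂ v)) ∈ F := hF.2.2.2 _ _ ht₁F ht₂F
    have hm1 : sub (sub (t₁ u) (sub (t₁ u) (t₂ v))) (t₁ u) = zero := sub_le _ _
    have hm2 : sub (sub (t₁ u) (sub (t₁ u) (t₂ v))) (t₂ v) = zero := meet_le_right _ _
    have hux : sub u x = zero := by rw [hu]; exact sub_le _ _
    have hvx : sub v x = zero := by rw [hv]; exact sub_le _ _
    have hm3 : sub (sub (t₁ u) (sub (t₁ u) (t₂ v))) (t₂ x) = zero :=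
      le_trans _ _ _ hm2 (poly_mono t₂ ht₂ v x hvx)
    have hm4 : sub (sub (t₁ u) (sub (t₁ u) (t₂ v))) (t₂ u) = zero :=
      steady u x (sub (t₁ u) (sub (t₁ u) (t₂ v))) t₁ t₂ ht₁ ht₂ hux hm1 hm3
    have h6 : sub (sub u v) (sub x v) = zero := le_mono u x v hux
    have h7 : sub (t₂ (sub u v)) (sub (t₂ x) (t₂ v)) = zero := by
      have h := poly_mono t₂ ht₂ (sub u v) (sub x v) h6
      rw [poly_sub t₂ ht₂ x v hvx] at h
      exact h
    have h10 : sub (t₂ v) (sub (t₂ v) (sub (t₂ x) (t₂ v))) = zero := by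
      rw [sub2 (t₂ v) (sub (t₂ x) (t₂ v)), sub_sub_cancel, sub_self]
    have h9 := meet_mono (sub (t₁ u) (sub (t₁ u) (t₂ v))) (t₂ (sub u v))
      (t₂ v) (sub (t₂ x) (t₂ v)) hm2 h7
    rw [h10, sub_zero] at h9
    have h11 : sub (sub (t₁ u) (sub (t₁ u) (t₂ v))) (sub (t₂ u) (t₂ (sub u v))) = zero :=
      lem14 _ _ _ hm4 h9
    have h12 : sub (sub (t₁ u) (sub (t₁ u) (t₂ v))) (t₂ (sub u (sub u v))) = zero := by
      rw [poly_sub t₂ ht₂ u (sub u v) (sub_le u v)]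
      exact h11
    have hfin : t₂ (sub u (sub u v)) ∈ F := hF.2.2.1 _ _ hmF h12
    intro hW
    exact hW t₂ ht₂ hfin
end

section
/- Let (G,o,−,0) be a subtraction Menger algebra of rank n, let a,b ∈ G with a ≰ b, and let F be a filter of G that is maximal among filters containing a and not containing b. Define W = {x ∈ G : t(x) ∉ F for every t ∈ Tₙ(G)}. If x,y ∈ W and x ≤ c, y ≤ c for some c ∈ G, then x⋎y = c−((c−x)⋏(c−y)) belongs to W. -/
namespace SMhelp

variable {G : Type}

/-- (y−x)−x = y−x -/
lemma L1 (sub : G → G → G) (sub1 : ∀ x y : G, sub x (sub y x) = x)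
    (x y : G) : sub (sub y x) x = sub y x := by
  have h := sub1 (sub y x) x
  rwa [sub1 x y] at h

/-- a−a = (b−a)−(b−a) -/
lemma L2 (sub : G → G → G) (sub1 : ∀ x y : G, sub x (sub y x) = x)
    (sub2 : ∀ x y : G, sub x (sub x y) = sub y (sub y x))
    (a b : G) : sub a a = sub (sub b a) (sub b a) := by
  have h := sub2 a (sub b a)
  rw [sub1 a b] at h
  rwa [L1 sub sub1 a b] at h

section Core

variable (sub : G → G → G) (zero : G)
variable (sub1 : ∀ x y : G, sub x (sub y x) = x)
variable (sub2 : ∀ x y : G, sub x (sub x y) = sub y (sub y x))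
variable (sub3 : ∀ x y z : G, sub (sub x y) z = sub (sub x z) y)
variable (sub4 : sub zero zero = zero)

include sub1 sub2 sub3 sub4

/-- x−x = 0 -/
lemma xx (a : G) : sub a a = zero := by
  have h1 := L2 sub sub1 sub2 a (sub a zero)
  rw [sub3 a zero a] at h1
  have h3 := L2 sub sub1 sub2 zero (sub a a)
  rw [← h3, sub4] at h1
  exact h1

/-- x−0 = x -/
lemma sub_zero (a : G) : sub a zero = a := by
  have h := sub1 a a
  rwa [xx sub zero sub1 sub2 sub3 sub4 a] at h

/-- 0−x = 0 -/
lemma zero_sub (a : G) : sub zero a = zero := by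
  have h := L1 sub sub1 a a
  rwa [xx sub zero sub1 sub2 sub3 sub4 a] at h

/-- x−y ≤ x -/
lemma le_base (x y : G) : sub (sub x y) x = zero := by
  rw [sub3 x y x, xx sub zero sub1 sub2 sub3 sub4 x,
    zero_sub sub zero sub1 sub2 sub3 sub4 y]

/-- x ≤ y → x = y−(y−x) -/
lemma repr' {x y : G} (h : sub x y = zero) : x = sub y (sub y x) := by
  have h2 := sub2 x y
  rw [h, sub_zero sub zero sub1 sub2 sub3 sub4 x] at h2
  exact h2

/-- x ≤ y → x−z ≤ y−z -/
lemma M1 {x y : G} (h : sub x y = zero) (z : G) :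
    sub (sub x z) (sub y z) = zero := by
  rw [repr' sub zero sub1 sub2 sub3 sub4 h, sub3 y (sub y x) z]
  exact le_base sub zero sub1 sub2 sub3 sub4 (sub y z) (sub y x)

/-- x ≤ y → z−y ≤ z−x -/
lemma M2 {x y : G} (h : sub x y = zero) (z : G) :
    sub (sub z y) (sub z x) = zero := by
  rw [sub3 z y (sub z x)]
  rw [sub2 z x, ← sub3 x y (sub x z), h,
    zero_sub sub zero sub1 sub2 sub3 sub4 (sub x z)]

lemma le_trans' {x y z : G} (hxy : sub x y = zero) (hyz : sub y z = zero) :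
    sub x z = zero := by
  have h := M1 sub zero sub1 sub2 sub3 sub4 hxy z
  rwa [hyz, sub_zero sub zero sub1 sub2 sub3 sub4 (sub x z)] at h

/-- x⋏y ≤ x -/
lemma meet_le_left (x y : G) : sub (sub x (sub x y)) x = zero :=
  le_base sub zero sub1 sub2 sub3 sub4 x (sub x y)

/-- x⋏y ≤ y -/
lemma meet_le_right (x y : G) : sub (sub x (sub x y)) y = zero := by
  rw [sub3 x (sub x y) y]
  exact xx sub zero sub1 sub2 sub3 sub4 (sub x y)

/-- z ≤ x, z ≤ y → z ≤ x⋏y -/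
lemma le_meet {x y z : G} (hzx : sub z x = zero) (hzy : sub z y = zero) :
    sub z (sub x (sub x y)) = zero := by
  have h1 : sub (sub x y) (sub x z) = zero :=
    M2 sub zero sub1 sub2 sub3 sub4 hzy x
  have h2 : sub (sub x (sub x z)) (sub x (sub x y)) = zero :=
    M2 sub zero sub1 sub2 sub3 sub4 h1 x
  rw [repr' sub zero sub1 sub2 sub3 sub4 hzx]
  exact h2

/-- x−(x−(x−y)) = x−y -/
lemma p6 (x y : G) : sub x (sub x (sub x y)) = sub x y := by
  rw [sub2 x (sub x y), le_base sub zero sub1 sub2 sub3 sub4 x y,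
    sub_zero sub zero sub1 sub2 sub3 sub4 (sub x y)]

/-- if z⋏w ≤ b and z−w ≤ b then z ≤ b -/
lemma Jlem {z w b : G} (h1 : sub (sub z (sub z w)) b = zero)
    (h2 : sub (sub z w) b = zero) : sub z b = zero := by
  have hrw : sub (sub z b) w = zero := by
    rw [sub3 z b w]; exact h2
  have hrz : sub (sub z b) z = zero := le_base sub zero sub1 sub2 sub3 sub4 z b
  have hrm : sub (sub z b) (sub z (sub z w)) = zero :=
    le_meet sub zero sub1 sub2 sub3 sub4 hrz hrw
  have hrb : sub (sub z b) b = zero :=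
    le_trans' sub zero sub1 sub2 sub3 sub4 hrm h1
  rwa [L1 sub sub1 b z] at hrb

end Core

end SMhelp

namespace SMhelp

section Menger

variable {G : Type} {n : ℕ}
variable (op : G → (Fin n → G) → G) (sub : G → G → G) (zero : G)
variable (sub1 : ∀ x y : G, sub x (sub y x) = x)
variable (sub2 : ∀ x y : G, sub x (sub x y) = sub y (sub y x))
variable (sub3 : ∀ x y z : G, sub (sub x y) z = sub (sub x z) y)
variable (sub4 : sub zero zero = zero)
variable (meetax : ∀ (u : G) (w : Fin n → G) (i : Fin n) (x y : G),
      op u (Function.update w i (sub x (sub x y)))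
        = sub (op u (Function.update w i x)) (op u (Function.update w i (sub x y))))

include sub1 sub2 sub3 sub4 meetax

/-- one-step monotonicity -/
lemma mono_step (a : G) (w : Fin n → G) (i : Fin n) {P Q : G}
    (hPQ : sub P Q = zero) :
    sub (op a (Function.update w i P)) (op a (Function.update w i Q)) = zero := by
  have h := meetax a w i Q P
  have hQP : sub Q (sub Q P) = P := by
    rw [sub2 Q P, hPQ, sub_zero sub zero sub1 sub2 sub3 sub4 P]
  rw [hQP] at h
  rw [h]
  exact le_base sub zero sub1 sub2 sub3 sub4
    (op a (Function.update w i Q)) (op a (Function.update w i (sub Q P)))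

/-- polynomials are monotone -/
lemma poly_mono {t : G → G} (ht : MengerPoly op t) :
    ∀ p q : G, sub p q = zero → sub (t p) (t q) = zero := by
  induction ht with
  | id => exact fun p q h => h
  | comp a w i s hs ih =>
      intro p q h
      exact mono_step op sub zero sub1 sub2 sub3 sub4 meetax a w i (ih p q h)

/-- q ≤ p → t(p)−t(q) ≤ t(p−q) -/
lemma poly_D {t : G → G} (ht : MengerPoly op t) :
    ∀ p q : G, sub q p = zero →
      sub (sub (t p) (t q)) (t (sub p q)) = zero := by
  induction ht with
  | id => exact fun p q _ => xx sub zero sub1 sub2 sub3 sub4 (sub p q)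
  | comp a w i s hs ih =>
      intro p q hqp
      have hQP : sub (s q) (s p) = zero :=
        poly_mono op sub zero sub1 sub2 sub3 sub4 meetax hs q p hqp
      have hD : sub (sub (s p) (s q)) (s (sub p q)) = zero := ih p q hqp
      have key : op a (Function.update w i (s q))
          = sub (op a (Function.update w i (s p)))
              (op a (Function.update w i (sub (s p) (s q)))) := by
        have h := meetax a w i (s p) (s q)
        have hm : sub (s p) (sub (s p) (s q)) = s q := by
          rw [sub2 (s p) (s q), hQP, sub_zero sub zero sub1 sub2 sub3 sub4 (s q)]
        rwa [hm] at h
      simp only []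
      rw [key]
      refine le_trans' sub zero sub1 sub2 sub3 sub4
        (meet_le_right sub zero sub1 sub2 sub3 sub4
          (op a (Function.update w i (s p)))
          (op a (Function.update w i (sub (s p) (s q)))))
        ?_
      exact mono_step op sub zero sub1 sub2 sub3 sub4 meetax a w i hD

end Menger

end SMhelp


open SMhelp

/-- If `x, y ∈ W` have a common upper bound `c`, then
`x⋎y = c−((c−x)⋏(c−y))` belongs to `W`. -/
theorem subtraction_menger_W_closed_join {G : Type} {n : ℕ}
    (op : G → (Fin n → G) → G) (sub : G → G → G) (zero : G)
    (superassoc : ∀ (x : G) (y z : Fin n → G),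
      op (op x y) z = op x (fun i => op (y i) z))
    (sub1 : ∀ x y : G, sub x (sub y x) = x)
    (sub2 : ∀ x y : G, sub x (sub x y) = sub y (sub y x))
    (sub3 : ∀ x y z : G, sub (sub x y) z = sub (sub x z) y)
    (sub4 : sub zero zero = zero)
    (distrib : ∀ (x y : G) (z : Fin n → G),
      op (sub x y) z = sub (op x z) (op y z))
    (meetax : ∀ (u : G) (w : Fin n → G) (i : Fin n) (x y : G),
      op u (Function.update w i (sub x (sub x y)))
        = sub (op u (Function.update w i x)) (op u (Function.update w i (sub x y))))
    (steady : ∀ (x y z : G) (t₁ t₂ : G → G), MengerPoly op t₁ → MengerPoly op t₂ →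
      sub x y = zero → sub z (t₁ x) = zero → sub z (t₂ y) = zero →
      sub z (t₂ x) = zero)
    (a b : G) (hab : sub a b ≠ zero)
    (F : Set G) (hF : IsSMFilter sub zero F) (haF : a ∈ F) (hbF : b ∉ F)
    (hFmax : ∀ F' : Set G, IsSMFilter sub zero F' → a ∈ F' → b ∉ F' →
      F ⊆ F' → F' = F)
    :
    ∀ x y c : G, x ∈ Wset op F → y ∈ Wset op F →
      sub x c = zero → sub y c = zero →
      sub c (sub (sub c x) (sub (sub c x) (sub c y))) ∈ Wset op F := by
  intro x y c hx hy hxc hyc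
  obtain ⟨hFne, hF0, hFup, hFmeet⟩ := hF
  have XX := xx sub zero sub1 sub2 sub3 sub4
  have SZ := sub_zero sub zero sub1 sub2 sub3 sub4
  have ZS := zero_sub sub zero sub1 sub2 sub3 sub4
  have LEB := le_base sub zero sub1 sub2 sub3 sub4
  have MLL := meet_le_left sub zero sub1 sub2 sub3 sub4
  have MLR := meet_le_right sub zero sub1 sub2 sub3 sub4
  have TR := @le_trans' G sub zero sub1 sub2 sub3 sub4
  have LM := @le_meet G sub zero sub1 sub2 sub3 sub4
  simp only [Wset, Set.mem_setOf_eq] at hx hy ⊢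
  set k := sub (sub c x) (sub (sub c x) (sub c y)) with hkdef
  set u := sub c k with hudef
  -- x ≤ u
  have hxu : sub x u = zero := by
    have hk1 : sub k (sub c x) = zero := MLL (sub c x) (sub c y)
    have h := M2 sub zero sub1 sub2 sub3 sub4 hk1 c
    have hxr : x = sub c (sub c x) := repr' sub zero sub1 sub2 sub3 sub4 hxc
    rw [← hxr] at h
    exact h
  -- u − x ≤ y
  have hux : sub (sub u x) y = zero := by
    have h1 : sub u x = sub (sub c x) (sub c y) := by
      rw [hudef, sub3 c k x, hkdef]
      exact p6 sub zero sub1 sub2 sub3 sub4 (sub c x) (sub c y)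
    have h2 : sub (sub (sub c x) (sub c y)) (sub c (sub c y)) = zero :=
      M1 sub zero sub1 sub2 sub3 sub4 (LEB c x) (sub c y)
    have hyr : y = sub c (sub c y) := repr' sub zero sub1 sub2 sub3 sub4 hyc
    rw [← hyr] at h2
    rw [h1]
    exact h2
  -- the maximality lemma
  have maxlem : ∀ g : G, g ∉ F → ∃ f ∈ F, sub (sub f (sub f g)) b = zero := by
    intro g hg
    by_contra hcon
    push_neg at hcon
    set F' : Set G := {h | ∃ f ∈ F, sub (sub f (sub f g)) h = zero} with hF'def
    have hgF' : g ∈ F' := by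
      obtain ⟨f0, hf0⟩ := hFne
      exact ⟨f0, hf0, MLR f0 g⟩
    have hF' : IsSMFilter sub zero F' := by
      refine ⟨⟨g, hgF'⟩, ?_, ?_, ?_⟩
      · rintro ⟨f, hf, hle⟩
        have h0 : sub (sub f (sub f g)) b = zero := by
          rw [SZ (sub f (sub f g))] at hle
          rw [hle]
          exact ZS b
        exact hcon f hf h0
      · rintro p q ⟨f, hf, h⟩ hpq
        exact ⟨f, hf, TR h hpq⟩
      · rintro p q ⟨f1, hf1, h1⟩ ⟨f2, hf2, h2⟩
        refine ⟨sub f1 (sub f1 f2), hFmeet f1 f2 hf1 hf2, ?_⟩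
        set f12 := sub f1 (sub f1 f2) with hf12def
        set m := sub f12 (sub f12 g) with hmdef
        have hmf12 : sub m f12 = zero := MLL f12 g
        have hmg : sub m g = zero := MLR f12 g
        have hmf1 : sub m f1 = zero := TR hmf12 (MLL f1 f2)
        have hmf2 : sub m f2 = zero := TR hmf12 (MLR f1 f2)
        have hmp : sub m p = zero := TR (LM hmf1 hmg) h1
        have hmq : sub m q = zero := TR (LM hmf2 hmg) h2
        exact LM hmp hmq
    have haF' : a ∈ F' := ⟨a, haF, MLL a g⟩
    have hbF' : b ∉ F' := by
      rintro ⟨f, hf, h⟩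
      exact hcon f hf h
    have hsub : F ⊆ F' := fun f hf => ⟨f, hf, MLL f g⟩
    have heq := hFmax F' hF' haF' hbF' hsub
    rw [heq] at hgF'
    exact hg hgF'
  -- main argument
  intro t ht htuF
  have htx : t x ∉ F := hx t ht
  have hty : t y ∉ F := hy t ht
  obtain ⟨f1, hf1, hb1⟩ := maxlem (t x) htx
  obtain ⟨f2, hf2, hb2⟩ := maxlem (t y) hty
  set f12 := sub f1 (sub f1 f2) with hf12def
  have hf12 : f12 ∈ F := hFmeet f1 f2 hf1 hf2
  set g := sub f12 (sub f12 (t u)) with hgdef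
  have hgF : g ∈ F := hFmeet f12 (t u) hf12 htuF
  have hgtu : sub g (t u) = zero := MLR f12 (t u)
  have hgf12 : sub g f12 = zero := MLL f12 (t u)
  have hgf1 : sub g f1 = zero := TR hgf12 (MLL f1 f2)
  have hgf2 : sub g f2 = zero := TR hgf12 (MLR f1 f2)
  have hw1 : sub (sub g (sub g (t x))) b = zero := by
    have h1 : sub (sub g (sub g (t x))) f1 = zero := TR (MLL g (t x)) hgf1
    have h2 : sub (sub g (sub g (t x))) (t x) = zero := MLR g (t x)
    exact TR (LM h1 h2) hb1
  have hw2 : sub (sub g (t x)) b = zero := by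
    have h1 : sub (sub g (t x)) f2 = zero := TR (LEB g (t x)) hgf2
    have h2 : sub (sub g (t x)) (sub (t u) (t x)) = zero :=
      M1 sub zero sub1 sub2 sub3 sub4 hgtu (t x)
    have h3 : sub (sub (t u) (t x)) (t (sub u x)) = zero :=
      poly_D op sub zero sub1 sub2 sub3 sub4 meetax ht u x hxu
    have h4 : sub (t (sub u x)) (t y) = zero :=
      poly_mono op sub zero sub1 sub2 sub3 sub4 meetax ht (sub u x) y hux
    have h5 : sub (sub g (t x)) (t y) = zero := TR (TR h2 h3) h4
    exact TR (LM h1 h5) hb2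
  have hgb : sub g b = zero := Jlem sub zero sub1 sub2 sub3 sub4 hw1 hw2
  exact hbF (hFup g b hgF hgb)
end

section
/- Let Φ be a set of partial n-place functions on a set A, containing the empty function ∅, closed under the Menger superposition and under set-theoretic difference. Then (Φ, O, ∖, ∅) is a subtraction Menger algebra of rank n; in particular, for all f, g, u, h₁, …, hₙ ∈ Φ, all w̄ ∈ Φⁿ, all 1 ≤ i ≤ n, and all polynomials t₁, t₂ ∈ Tₙ(Φ): (f∖g)[h₁…hₙ] = f[h₁…hₙ] ∖ g[h₁…hₙ]; u[w̄|ᵢ(f∖(f∖g))] = u[w̄|ᵢf] ∖ u[w̄|ᵢ(f∖g)]; and if f∖g = ∅, h∖t₁(f) = ∅ and h∖t₂(g) = ∅ for h ∈ Φ, then h∖t₂(f) = ∅. -/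
/-- The Menger superposition `f[g₁…gₙ]` of partial `n`-place functions
(sets of pairs in `(Fin n → A) × A`). -/
def MengerComp {A : Type} {n : ℕ} (f : Set ((Fin n → A) × A))
    (g : Fin n → Set ((Fin n → A) × A)) : Set ((Fin n → A) × A) :=
  {p | ∃ b : Fin n → A, (∀ i, (p.1, b i) ∈ g i) ∧ (b, p.2) ∈ f}

/-- `f` is a partial `n`-place function: it is single-valued as a subset of
`(Fin n → A) × A`. -/
def IsPartialFun {A : Type} {n : ℕ} (f : Set ((Fin n → A) × A)) : Prop :=
  ∀ (a : Fin n → A) (b c : A), (a, b) ∈ f → (a, c) ∈ f → b = c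

/-- The unary polynomials `Tₙ(Φ)` with parameters from `Φ`: the smallest
collection of maps containing the identity and closed under
`t ↦ (f ↦ a[b₁ … bᵢ₋₁ (t f) bᵢ₊₁ … bₙ])` with `a, b₁, …, bₙ ∈ Φ`. -/
inductive MengerPolyOn {A : Type} {n : ℕ} (Φ : Set (Set ((Fin n → A) × A))) :
    (Set ((Fin n → A) × A) → Set ((Fin n → A) × A)) → Prop
  | id : MengerPolyOn Φ (fun f => f)
  | comp (a : Set ((Fin n → A) × A)) (b : Fin n → Set ((Fin n → A) × A))
      (i : Fin n) (t : Set ((Fin n → A) × A) → Set ((Fin n → A) × A)) :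
      a ∈ Φ → (∀ j, b j ∈ Φ) → MengerPolyOn Φ t →
      MengerPolyOn Φ (fun f => MengerComp a (Function.update b i (t f)))

private lemma polyDomain {A : Type} {n : ℕ} {Φ : Set (Set ((Fin n → A) × A))}
    {t : Set ((Fin n → A) × A) → Set ((Fin n → A) × A)}
    (ht : MengerPolyOn Φ t) :
    ∀ f : Set ((Fin n → A) × A), ∀ p ∈ t f, ∃ d, (p.1, d) ∈ f := by
  induction ht with
  | id => exact fun f p hp => ⟨p.2, hp⟩
  | comp a b i t _ _ _ ih =>
    intro f p hp
    obtain ⟨c, hc, -⟩ := hp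
    have h := hc i
    rw [Function.update_self] at h
    exact ih f (p.1, c i) h

private lemma polyRestrict {A : Type} {n : ℕ} {Φ : Set (Set ((Fin n → A) × A))}
    {f g : Set ((Fin n → A) × A)} (hg : IsPartialFun g) (hfg : f ⊆ g)
    {t : Set ((Fin n → A) × A) → Set ((Fin n → A) × A)}
    (ht : MengerPolyOn Φ t) :
    ∀ p ∈ t g, (∃ d, (p.1, d) ∈ f) → p ∈ t f := by
  induction ht with
  | id =>
    rintro p hp ⟨d, hd⟩
    have e : p.2 = d := hg p.1 p.2 d hp (hfg hd)
    show (p.1, p.2) ∈ f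
    rw [e]; exact hd
  | comp a b i t _ _ _ ih =>
    intro p hp hd
    obtain ⟨c, hc, hca⟩ := hp
    refine ⟨c, fun j => ?_, hca⟩
    by_cases hj : j = i
    · subst hj
      rw [Function.update_self]
      have h := hc j
      rw [Function.update_self] at h
      exact ih (p.1, c j) h hd
    · rw [Function.update_of_ne hj]
      have h := hc j
      rwa [Function.update_of_ne hj] at h

/-- A set `Φ` of partial `n`-place functions on `A` containing the empty
function, closed under the Menger superposition and under set-theoretic
difference, is a subtraction Menger algebra
`(Φ, O, ∖, ∅)` of rank `n`: superassociativity and the subtraction-algebra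
identities hold, and moreover
`(f∖g)[h₁…hₙ] = f[h₁…hₙ] ∖ g[h₁…hₙ]`,
`u[w̄|ᵢ(f∖(f∖g))] = u[w̄|ᵢf] ∖ u[w̄|ᵢ(f∖g)]`, and
`f∖g = ∅ ∧ h∖t₁(f) = ∅ ∧ h∖t₂(g) = ∅ → h∖t₂(f) = ∅`. -/
theorem difference_menger_is_subtraction_menger {A : Type} {n : ℕ}
    (Φ : Set (Set ((Fin n → A) × A)))
    (hfun : ∀ f ∈ Φ, IsPartialFun f)
    (hempty : (∅ : Set ((Fin n → A) × A)) ∈ Φ)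
    (hop : ∀ f ∈ Φ, ∀ g : Fin n → Set ((Fin n → A) × A),
      (∀ i, g i ∈ Φ) → MengerComp f g ∈ Φ)
    (hdiff : ∀ f ∈ Φ, ∀ g ∈ Φ, f \ g ∈ Φ) :
    -- superassociativity
    (∀ f ∈ Φ, ∀ g h : Fin n → Set ((Fin n → A) × A),
      (∀ i, g i ∈ Φ) → (∀ i, h i ∈ Φ) →
      MengerComp (MengerComp f g) h
        = MengerComp f (fun i => MengerComp (g i) h)) ∧
    -- `(Φ, ∖, ∅)` is a subtraction algebra
    (∀ f ∈ Φ, ∀ g ∈ Φ, f \ (g \ f) = f) ∧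
    (∀ f ∈ Φ, ∀ g ∈ Φ, f \ (f \ g) = g \ (g \ f)) ∧
    (∀ f ∈ Φ, ∀ g ∈ Φ, ∀ h ∈ Φ, (f \ g) \ h = (f \ h) \ g) ∧
    ((∅ : Set ((Fin n → A) × A)) \ ∅ = ∅) ∧
    -- axiom (11)
    (∀ f ∈ Φ, ∀ g ∈ Φ, ∀ h : Fin n → Set ((Fin n → A) × A),
      (∀ i, h i ∈ Φ) →
      MengerComp (f \ g) h = MengerComp f h \ MengerComp g h) ∧
    -- axiom (12)
    (∀ u ∈ Φ, ∀ f ∈ Φ, ∀ g ∈ Φ, ∀ w : Fin n → Set ((Fin n → A) × A),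
      (∀ j, w j ∈ Φ) → ∀ i : Fin n,
      MengerComp u (Function.update w i (f \ (f \ g)))
        = MengerComp u (Function.update w i f)
            \ MengerComp u (Function.update w i (f \ g))) ∧
    -- axiom (13)
    (∀ f ∈ Φ, ∀ g ∈ Φ, ∀ h ∈ Φ,
      ∀ t₁ t₂ : Set ((Fin n → A) × A) → Set ((Fin n → A) × A),
      MengerPolyOn Φ t₁ → MengerPolyOn Φ t₂ →
      f \ g = ∅ → h \ t₁ f = ∅ → h \ t₂ g = ∅ → h \ t₂ f = ∅) := by
  refine ⟨?_, ?_, ?_, ?_, ?_, ?_, ?_, ?_⟩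
  · -- superassociativity
    intro f _ g h _ hh
    ext p
    constructor
    · rintro ⟨b, hb, c, hc, hcf⟩
      exact ⟨c, fun i => ⟨b, hb, hc i⟩, hcf⟩
    · rintro ⟨c, hc, hcf⟩
      choose b hb hbc using hc
      refine ⟨fun j => b j j, fun j => hb j j, c, fun i => ?_, hcf⟩
      have e : (fun j => b j j) = b i := funext fun j =>
        hfun (h j) (hh j) p.1 (b j j) (b i j) (hb j j) (hb i j)
      rw [e]
      exact hbc i
  · intro f _ g _; ext p; simp only [Set.mem_diff]; tauto
  · intro f _ g _; ext p; simp only [Set.mem_diff]; tauto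
  · intro f _ g _ h _; ext p; simp only [Set.mem_diff]; tauto
  · simp
  · -- axiom (11)
    intro f hf g hg h hh
    ext p
    constructor
    · rintro ⟨b, hb, hbf, hbg⟩
      refine ⟨⟨b, hb, hbf⟩, ?_⟩
      rintro ⟨b', hb', hb'g⟩
      have e : b' = b := funext fun i =>
        hfun (h i) (hh i) p.1 (b' i) (b i) (hb' i) (hb i)
      rw [e] at hb'g
      exact hbg hb'g
    · rintro ⟨⟨b, hb, hbf⟩, hng⟩
      exact ⟨b, hb, hbf, fun hbg => hng ⟨b, hb, hbg⟩⟩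
  · -- axiom (12)
    intro u hu f hf g hg w hw i
    have hcap : f \ (f \ g) = f ∩ g := by
      ext p; simp only [Set.mem_diff, Set.mem_inter_iff]; tauto
    rw [hcap]
    ext p
    constructor
    · rintro ⟨b, hb, hbu⟩
      have hbi := hb i
      rw [Function.update_self] at hbi
      constructor
      · refine ⟨b, fun j => ?_, hbu⟩
        by_cases hj : j = i
        · subst hj; rw [Function.update_self]; exact hbi.1
        · have h := hb j; rwa [Function.update_of_ne hj] at h ⊢
      · rintro ⟨b', hb', hb'u⟩
        have hb'i := hb' i
        rw [Function.update_self] at hb'i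
        have e : b' i = b i :=
          hfun f hf p.1 (b' i) (b i) hb'i.1 hbi.1
        rw [e] at hb'i
        exact hb'i.2 hbi.2
    · rintro ⟨⟨b, hb, hbu⟩, hneg⟩
      have hbi := hb i
      rw [Function.update_self] at hbi
      have hbig : (p.1, b i) ∈ g := by
        by_contra hng
        refine hneg ⟨b, fun j => ?_, hbu⟩
        by_cases hj : j = i
        · subst hj; rw [Function.update_self]; exact ⟨hbi, hng⟩
        · have h := hb j; rwa [Function.update_of_ne hj] at h ⊢
      refine ⟨b, fun j => ?_, hbu⟩
      by_cases hj : j = i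
      · subst hj; rw [Function.update_self]; exact ⟨hbi, hbig⟩
      · have h := hb j; rwa [Function.update_of_ne hj] at h ⊢
  · -- axiom (13)
    intro f hf g hg h hh t₁ t₂ ht₁ ht₂ hfg hht1 hht2
    have hfsub : f ⊆ g := Set.diff_eq_empty.mp hfg
    have h1 : h ⊆ t₁ f := Set.diff_eq_empty.mp hht1
    have h2 : h ⊆ t₂ g := Set.diff_eq_empty.mp hht2
    rw [Set.diff_eq_empty]
    intro p hp
    exact polyRestrict (hfun g hg) hfsub ht₂ p (h2 hp)
      (polyDomain ht₁ f p (h1 hp))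
end
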